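/- arXiv:1308.1259 — 3 statements merged into one kernel-verified Lean document; each statement's English description precedes it below -/
import Mathlib

section
/- Let S be an elementary trapping set of size a+1 in class T (every variable node adjacent to at least two satisfied check nodes), and let S' ⊂ S be an elementary trapping subset of size a also in class T. Then the unique variable node v ∈ S \ S' is adjacent only to unsatisfied check nodes of S' (and to at least two of them); v has no edges to satisfied check nodes of S'. -/
open SimpleGraph Finset

/-- Degree of a node `c` in the subgraph induced by the variable-node set `S`:
the number of neighbors of `c` inside `S`. -/
def degIn {V : Type} [DecidableEq V] (G : SimpleGraph V) [DecidableRel G.Adj]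
    (S : Finset V) (c : V) : Nat :=
  (S.filter fun v => G.Adj c v).card

/-- Class `T`: elementary trapping sets of variable nodes whose induced subgraph is
connected and in which every variable node is adjacent to at least two satisfied
(degree-2) check nodes. -/
def memT {V : Type} [Fintype V] [DecidableEq V] (G : SimpleGraph V) [DecidableRel G.Adj]
    (isVar : V → Prop) [DecidablePred isVar] (S : Finset V) : Prop :=
  (∀ v ∈ S, isVar v) ∧
  (∀ c, ¬ isVar c → degIn G S c ≤ 2) ∧
  (∀ v ∈ S, 2 ≤ (univ.filter fun c => ¬ isVar c ∧ degIn G S c = 2 ∧ G.Adj v c).card) ∧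
  (G.induce {x : V | x ∈ S ∨ ∃ v ∈ S, G.Adj x v}).Connected

theorem stmt4 {V : Type} [Fintype V] [DecidableEq V]
    (G : SimpleGraph V) [DecidableRel G.Adj]
    (isVar : V → Prop) [DecidablePred isVar]
    (hbip : ∀ u v, G.Adj u v → (isVar u ↔ ¬ isVar v))
    (S S' : Finset V) (hsub : S' ⊆ S) (hcard : S.card = S'.card + 1)
    (hTS : memT G isVar S) (hTS' : memT G isVar S') :
    ∀ v ∈ S, v ∉ S' →
      (∀ c, ¬ isVar c → degIn G S' c = 2 → ¬ G.Adj v c) ∧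
      2 ≤ (univ.filter fun c => ¬ isVar c ∧ degIn G S' c = 1 ∧ G.Adj v c).card := by
  intro v hv hv'
  have hS : S = insert v S' := by
    refine (Finset.eq_of_subset_of_card_le ?_ ?_).symm
    · intro x hx
      rcases Finset.mem_insert.mp hx with h | h
      · exact h ▸ hv
      · exact hsub h
    · rw [Finset.card_insert_of_notMem hv', hcard]
  have hdeg : ∀ c, G.Adj v c → degIn G S c = degIn G S' c + 1 := by
    intro c hadj
    unfold degIn
    rw [hS, Finset.filter_insert, if_pos hadj.symm,
      Finset.card_insert_of_notMem (fun h => hv' (Finset.mem_filter.mp h).1)]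
  constructor
  · intro c hc hdc hadj
    have h2 := hTS.2.1 c hc
    rw [hdeg c hadj, hdc] at h2
    omega
  · refine le_trans (hTS.2.2.1 v hv) (Finset.card_le_card ?_)
    intro c hc
    simp only [Finset.mem_filter, Finset.mem_univ, true_and] at hc ⊢
    obtain ⟨hnv, hd2, hadj⟩ := hc
    have := hdeg c hadj
    exact ⟨hnv, by omega, hadj⟩
end

section
/- In a variable-regular Tanner graph with variable node degree d_l = 4 and girth at least 6, the only (6,2) elementary trapping sets in class T, represented as normal graphs, are one of exactly three non-isomorphic graphs on 6 vertices with 11 edges: (i) one vertex of degree 2 and all others of degree 4 (unique structure), or (ii)/(iii) two vertices of degree 3 that are adjacent, respectively non-adjacent, and all others of degree 4. -/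
open SimpleGraph Finset

/-- The normal graph of an elementary trapping set `S`: variable nodes are adjacent iff
they share a degree-2 (satisfied) check node in the induced subgraph. -/
def normalGraph {V : Type} [DecidableEq V] (G : SimpleGraph V) [DecidableRel G.Adj]
    (isVar : V → Prop) (S : Finset V) : SimpleGraph {x // x ∈ S} :=
  SimpleGraph.fromRel (fun u w =>
    ∃ c, ¬ isVar c ∧ degIn G S c = 2 ∧ G.Adj c u.1 ∧ G.Adj c w.1)

/-- Degree of a vertex in a (possibly nonconstructive) simple graph. -/
noncomputable def ndeg {W : Type} (H : SimpleGraph W) (v : W) : Nat :=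
  (H.neighborSet v).ncard

/-- One vertex of degree 2, all others of degree 4. -/
def caseI {W : Type} (H : SimpleGraph W) : Prop :=
  ∃ v0, ndeg H v0 = 2 ∧ ∀ v, v ≠ v0 → ndeg H v = 4

/-- Two adjacent vertices of degree 3, all others of degree 4. -/
def caseII {W : Type} (H : SimpleGraph W) : Prop :=
  ∃ v1 v2, v1 ≠ v2 ∧ H.Adj v1 v2 ∧ ndeg H v1 = 3 ∧ ndeg H v2 = 3 ∧
    ∀ v, v ≠ v1 → v ≠ v2 → ndeg H v = 4

/-- Two non-adjacent vertices of degree 3, all others of degree 4. -/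
def caseIII {W : Type} (H : SimpleGraph W) : Prop :=
  ∃ v1 v2, v1 ≠ v2 ∧ ¬ H.Adj v1 v2 ∧ ndeg H v1 = 3 ∧ ndeg H v2 = 3 ∧
    ∀ v, v ≠ v1 → v ≠ v2 → ndeg H v = 4


/-! ### Auxiliary material -/


lemma no4cycle {V : Type} (G : SimpleGraph V) (hg : (6:ℕ∞) ≤ G.egirth)
    {a b c d : V} (hab : G.Adj a b) (hbc : G.Adj b c) (hcd : G.Adj c d) (hda : G.Adj d a)
    (hac : a ≠ c) (hbd : b ≠ d) : False := by
  let w : G.Walk a a := .cons hab (.cons hbc (.cons hcd (.cons hda .nil)))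
  have hcyc : w.IsCycle := by
    rw [Walk.isCycle_def, Walk.isTrail_def]
    refine ⟨?_, ?_, ?_⟩ <;>
      simp [w, Sym2.eq_iff, hab.ne, hbc.ne, hcd.ne, hda.ne, hda.ne', hab.ne', hbc.ne', hcd.ne',
        hac, hbd, hac.symm, hbd.symm]
  have h := le_egirth.mp hg a w hcyc
  have hl : w.length = 4 := rfl
  rw [hl] at h
  norm_num at h

def PatI (i j : Fin 6) : Prop :=
  (i = 0 ∧ (j = 1 ∨ j = 2 ∨ j = 3)) ∨ (j = 0 ∧ (i = 1 ∨ i = 2 ∨ i = 3)) ∨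
    (i = 4 ∧ j = 5) ∨ (i = 5 ∧ j = 4)

def PatII (i j : Fin 6) : Prop :=
  (i = 0 ∧ (j = 2 ∨ j = 3)) ∨ (j = 0 ∧ (i = 2 ∨ i = 3)) ∨
    (i = 1 ∧ (j = 4 ∨ j = 5)) ∨ (j = 1 ∧ (i = 4 ∨ i = 5))

def PatIII (i j : Fin 6) : Prop :=
  (i = 0 ∧ (j = 1 ∨ j = 2)) ∨ (j = 0 ∧ (i = 1 ∨ i = 2)) ∨
    (i = 1 ∧ j = 3) ∨ (j = 1 ∧ i = 3) ∨ (i = 4 ∧ j = 5) ∨ (i = 5 ∧ j = 4)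

lemma ndeg_eq_degree {W : Type} [Fintype W] (H : SimpleGraph W) [DecidableRel H.Adj] (v : W) :
    ndeg H v = H.degree v := by
  rw [ndeg, Set.ncard_eq_toFinset_card']
  rfl

lemma compl_deg {W : Type} [Fintype W] [DecidableEq W] (hW : Fintype.card W = 6)
    (H : SimpleGraph W) [DecidableRel H.Adj] (v : W) : Hᶜ.degree v = 5 - H.degree v := by
  rw [SimpleGraph.degree_compl, hW]

lemma six_exhaust {W : Type} [Fintype W] [DecidableEq W] (hW : Fintype.card W = 6)
    (p q r s t u : W) (h1 : p ≠ q) (h2 : p ≠ r) (h3 : p ≠ s) (h4 : p ≠ t) (h5 : p ≠ u)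
    (h6 : q ≠ r) (h7 : q ≠ s) (h8 : q ≠ t) (h9 : q ≠ u) (h10 : r ≠ s) (h11 : r ≠ t)
    (h12 : r ≠ u) (h13 : s ≠ t) (h14 : s ≠ u) (h15 : t ≠ u) :
    ∀ z : W, z = p ∨ z = q ∨ z = r ∨ z = s ∨ z = t ∨ z = u := by
  have hcard : ({p,q,r,s,t,u} : Finset W).card = 6 := by
    rw [card_insert_of_notMem (by simp_all), card_insert_of_notMem (by simp_all),
      card_insert_of_notMem (by simp_all), card_insert_of_notMem (by simp_all),
      card_insert_of_notMem (by simp_all), card_singleton]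
  have huniv : ({p,q,r,s,t,u} : Finset W) = univ := eq_univ_of_card _ (hcard.trans hW.symm)
  intro z
  have : z ∈ ({p,q,r,s,t,u} : Finset W) := huniv ▸ mem_univ z
  simpa using this

lemma nbrs_eq_singleton {W : Type} [Fintype W] [DecidableEq W] {H : SimpleGraph W}
    [DecidableRel H.Adj] {v w : W} (hd : H.degree v = 1) (ha : H.Adj v w) :
    H.neighborFinset v = {w} :=
  (Finset.eq_of_subset_of_card_le (by simpa using ha)
    (by rw [card_singleton]; exact le_of_eq hd)).symm

lemma compl_adj_iff {W : Type} (H : SimpleGraph W) (p q : W) :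
    H.Adj p q ↔ p ≠ q ∧ ¬ Hᶜ.Adj p q := by
  rw [SimpleGraph.compl_adj]
  constructor
  · exact fun hpq => ⟨hpq.ne, fun h => h.2 hpq⟩
  · rintro ⟨hne, hn⟩
    by_contra hna
    exact hn ⟨hne, hna⟩

lemma iso_of_maps {W W' : Type} [Fintype W] [Fintype W']
    (hW : Fintype.card W = 6) (hW' : Fintype.card W' = 6)
    (H : SimpleGraph W) (H' : SimpleGraph W') (x : Fin 6 → W) (y : Fin 6 → W')
    (hx : Function.Injective x) (hy : Function.Injective y)
    (P : Fin 6 → Fin 6 → Prop)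
    (hH : ∀ i j, H.Adj (x i) (x j) ↔ P i j) (hH' : ∀ i j, H'.Adj (y i) (y j) ↔ P i j) :
    Nonempty (H ≃g H') := by
  have hxb : Function.Bijective x :=
    (Fintype.bijective_iff_injective_and_card x).mpr ⟨hx, by simp [hW]⟩
  have hyb : Function.Bijective y :=
    (Fintype.bijective_iff_injective_and_card y).mpr ⟨hy, by simp [hW']⟩
  let ex := Equiv.ofBijective x hxb
  let ey := Equiv.ofBijective y hyb
  refine ⟨⟨ex.symm.trans ey, ?_⟩⟩
  intro u w
  show H'.Adj (y (ex.symm u)) (y (ex.symm w)) ↔ H.Adj u w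
  rw [hH']
  conv_rhs => rw [show u = x (ex.symm u) from (ex.apply_symm_apply u).symm,
    show w = x (ex.symm w) from (ex.apply_symm_apply w).symm]
  rw [hH]

set_option maxHeartbeats 1000000 in
lemma charI {W : Type} [Fintype W] [DecidableEq W] (hW : Fintype.card W = 6)
    (H : SimpleGraph W) [DecidableRel H.Adj]
    (h : caseI H) :
    ∃ x : Fin 6 → W, Function.Injective x ∧
      ∀ i j, H.Adj (x i) (x j) ↔ (i ≠ j ∧ ¬ PatI i j) := by
  obtain ⟨v0, h2, h4⟩ := h
  have hdegK : ∀ v : W, Hᶜ.degree v = 5 - H.degree v := fun v => compl_deg hW H v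
  have hd0 : Hᶜ.degree v0 = 3 := by rw [hdegK, ← ndeg_eq_degree, h2]
  have hd1 : ∀ v, v ≠ v0 → Hᶜ.degree v = 1 := fun v hv => by
    rw [hdegK, ← ndeg_eq_degree, h4 v hv]
  have hN3 : (Hᶜ.neighborFinset v0).card = 3 := hd0
  obtain ⟨a, b, c, hab, hac, hbc, hN⟩ := Finset.card_eq_three.mp hN3
  have haN : Hᶜ.Adj v0 a := by
    rw [← SimpleGraph.mem_neighborFinset, hN]; simp
  have hbN : Hᶜ.Adj v0 b := by
    rw [← SimpleGraph.mem_neighborFinset, hN]; simp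
  have hcN : Hᶜ.Adj v0 c := by
    rw [← SimpleGraph.mem_neighborFinset, hN]; simp
  have hnbra : Hᶜ.neighborFinset a = {v0} := nbrs_eq_singleton (hd1 a haN.ne') haN.symm
  have hnbrb : Hᶜ.neighborFinset b = {v0} := nbrs_eq_singleton (hd1 b hbN.ne') hbN.symm
  have hnbrc : Hᶜ.neighborFinset c = {v0} := nbrs_eq_singleton (hd1 c hcN.ne') hcN.symm
  have hM2 : (univ \ insert v0 (Hᶜ.neighborFinset v0)).card = 2 := by
    rw [Finset.card_sdiff_of_subset (subset_univ _), card_univ, hW,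
      Finset.card_insert_of_notMem (by simp), hN3]
  obtain ⟨d, e, hde, hM⟩ := Finset.card_eq_two.mp hM2
  have hdM : d ∈ univ \ insert v0 (Hᶜ.neighborFinset v0) := by rw [hM]; exact mem_insert_self _ _
  have heM : e ∈ univ \ insert v0 (Hᶜ.neighborFinset v0) := by
    rw [hM]; exact mem_insert_of_mem (mem_singleton_self _)
  obtain ⟨hdv0, hda, hdb, hdc⟩ : d ≠ v0 ∧ d ≠ a ∧ d ≠ b ∧ d ≠ c := by
    have h : d ∉ insert v0 ({a, b, c} : Finset W) := by
      rw [← hN]; exact (Finset.mem_sdiff.mp hdM).2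
    simpa [not_or] using h
  obtain ⟨hev0, hea, heb, hec⟩ : e ≠ v0 ∧ e ≠ a ∧ e ≠ b ∧ e ≠ c := by
    have h : e ∉ insert v0 ({a, b, c} : Finset W) := by
      rw [← hN]; exact (Finset.mem_sdiff.mp heM).2
    simpa [not_or] using h
  have hdN : d ∉ Hᶜ.neighborFinset v0 := by rw [hN]; simp [hda, hdb, hdc]
  have hav0 : a ≠ v0 := haN.ne'
  have hbv0 : b ≠ v0 := hbN.ne'
  have hcv0 : c ≠ v0 := hcN.ne'
  have hdeg_d : Hᶜ.degree d = 1 := hd1 d hdv0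
  have hde' : Hᶜ.Adj d e := by
    obtain ⟨x, hx⟩ := Finset.card_eq_one.mp (hdeg_d : (Hᶜ.neighborFinset d).card = 1)
    have hxd : Hᶜ.Adj d x := by rw [← SimpleGraph.mem_neighborFinset, hx]; simp
    have hxv0 : x ≠ v0 := by
      intro hh
      rw [hh] at hxd
      exact hdN (by rw [SimpleGraph.mem_neighborFinset]; exact hxd.symm)
    have hxa : x ≠ a := by
      intro hh; rw [hh] at hxd
      have : d ∈ Hᶜ.neighborFinset a := by rw [SimpleGraph.mem_neighborFinset]; exact hxd.symm
      rw [hnbra] at this; exact hdv0 (by simpa using this)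
    have hxb : x ≠ b := by
      intro hh; rw [hh] at hxd
      have : d ∈ Hᶜ.neighborFinset b := by rw [SimpleGraph.mem_neighborFinset]; exact hxd.symm
      rw [hnbrb] at this; exact hdv0 (by simpa using this)
    have hxc : x ≠ c := by
      intro hh; rw [hh] at hxd
      have : d ∈ Hᶜ.neighborFinset c := by rw [SimpleGraph.mem_neighborFinset]; exact hxd.symm
      rw [hnbrc] at this; exact hdv0 (by simpa using this)
    have hxde : x = d ∨ x = e ∨ x = a ∨ x = b ∨ x = c ∨ x = v0 :=
      (six_exhaust hW d e a b c v0 hde hda hdb hdc hdv0 hea heb hec hev0 hab hac hav0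
        hbc hbv0 hcv0 x).imp id id
    have : x = e := by
      rcases hxde with h|h|h|h|h|h
      · exact absurd (h ▸ hxd) (Hᶜ.irrefl ·)
      · exact h
      · exact absurd h hxa
      · exact absurd h hxb
      · exact absurd h hxc
      · exact absurd h hxv0
    exact this ▸ hxd
  have hnbrd : Hᶜ.neighborFinset d = {e} := nbrs_eq_singleton hdeg_d hde'
  have hnbre : Hᶜ.neighborFinset e = {d} := nbrs_eq_singleton (hd1 e hev0) hde'.symm
  have hchar : ∀ u w : W, Hᶜ.Adj u w ↔
      ((u = v0 ∧ (w = a ∨ w = b ∨ w = c)) ∨ (w = v0 ∧ (u = a ∨ u = b ∨ u = c)) ∨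
        (u = d ∧ w = e) ∨ (u = e ∧ w = d)) := by
    intro u w
    constructor
    · intro huw
      rcases six_exhaust hW v0 a b c d e hav0.symm hbv0.symm hcv0.symm hdv0.symm hev0.symm
        hab hac hda.symm hea.symm hbc hdb.symm heb.symm hdc.symm hec.symm hde u with
        h|h|h|h|h|h
      · subst h
        have hw : w ∈ ({a, b, c} : Finset W) := by
          rw [← hN, SimpleGraph.mem_neighborFinset]; exact huw
        rcases Finset.mem_insert.mp hw with rfl | hw
        · exact Or.inl ⟨rfl, Or.inl rfl⟩
        rcases Finset.mem_insert.mp hw with rfl | hw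
        · exact Or.inl ⟨rfl, Or.inr (Or.inl rfl)⟩
        · exact Or.inl ⟨rfl, Or.inr (Or.inr (Finset.mem_singleton.mp hw))⟩
      · subst h
        have hw : w ∈ ({v0} : Finset W) := by
          rw [← hnbra, SimpleGraph.mem_neighborFinset]; exact huw
        exact Or.inr (Or.inl ⟨Finset.mem_singleton.mp hw, Or.inl rfl⟩)
      · subst h
        have hw : w ∈ ({v0} : Finset W) := by
          rw [← hnbrb, SimpleGraph.mem_neighborFinset]; exact huw
        exact Or.inr (Or.inl ⟨Finset.mem_singleton.mp hw, Or.inr (Or.inl rfl)⟩)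
      · subst h
        have hw : w ∈ ({v0} : Finset W) := by
          rw [← hnbrc, SimpleGraph.mem_neighborFinset]; exact huw
        exact Or.inr (Or.inl ⟨Finset.mem_singleton.mp hw, Or.inr (Or.inr rfl)⟩)
      · subst h
        have hw : w ∈ ({e} : Finset W) := by
          rw [← hnbrd, SimpleGraph.mem_neighborFinset]; exact huw
        exact Or.inr (Or.inr (Or.inl ⟨rfl, Finset.mem_singleton.mp hw⟩))
      · subst h
        have hw : w ∈ ({d} : Finset W) := by
          rw [← hnbre, SimpleGraph.mem_neighborFinset]; exact huw
        exact Or.inr (Or.inr (Or.inr ⟨rfl, Finset.mem_singleton.mp hw⟩))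
    · rintro (⟨rfl, rfl|rfl|rfl⟩|⟨rfl, rfl|rfl|rfl⟩|⟨rfl, rfl⟩|⟨rfl, rfl⟩)
      exacts [haN, hbN, hcN, haN.symm, hbN.symm, hcN.symm, hde', hde'.symm]
  have hnodup : ([v0, a, b, c, d, e] : List W).Nodup := by
    simp only [List.nodup_cons, List.mem_cons, List.mem_singleton, List.not_mem_nil,
      List.nodup_nil, or_false, not_or, and_true, List.mem_nil_iff]
    exact ⟨⟨Ne.symm hav0, Ne.symm hbv0, Ne.symm hcv0, Ne.symm hdv0, Ne.symm hev0⟩,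
      ⟨hab, hac, fun h => hda h.symm, fun h => hea h.symm⟩,
      ⟨hbc, fun h => hdb h.symm, fun h => heb h.symm⟩,
      ⟨fun h => hdc h.symm, fun h => hec h.symm⟩, hde, not_false⟩
  obtain ⟨x, hinj, hx0, hx1, hx2, hx3, hx4, hx5⟩ :
      ∃ x : Fin 6 → W, Function.Injective x ∧ x 0 = v0 ∧ x 1 = a ∧ x 2 = b ∧ x 3 = c ∧
        x 4 = d ∧ x 5 = e :=
    ⟨fun i => ([v0, a, b, c, d, e] : List W).get i,
      List.nodup_iff_injective_get.mp hnodup, rfl, rfl, rfl, rfl, rfl, rfl⟩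
  refine ⟨x, hinj, ?_⟩
  intro i j
  rw [compl_adj_iff, hchar, ← hx0, ← hx1, ← hx2, ← hx3, ← hx4, ← hx5]
  simp only [ne_eq, hinj.eq_iff, PatI]
  try tauto

set_option maxHeartbeats 1000000 in
lemma charII {W : Type} [Fintype W] [DecidableEq W] (hW : Fintype.card W = 6)
    (H : SimpleGraph W) [DecidableRel H.Adj]
    (h : caseII H) :
    ∃ x : Fin 6 → W, Function.Injective x ∧
      ∀ i j, H.Adj (x i) (x j) ↔ (i ≠ j ∧ ¬ PatII i j) := by
  obtain ⟨v1, v2, hv12, hadj, h3a, h3b, h4⟩ := h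
  have hdegK : ∀ v : W, Hᶜ.degree v = 5 - H.degree v := fun v => compl_deg hW H v
  have hd1 : Hᶜ.degree v1 = 2 := by rw [hdegK, ← ndeg_eq_degree, h3a]
  have hd2 : Hᶜ.degree v2 = 2 := by rw [hdegK, ← ndeg_eq_degree, h3b]
  have hdo : ∀ v, v ≠ v1 → v ≠ v2 → Hᶜ.degree v = 1 := fun v hx hy => by
    rw [hdegK, ← ndeg_eq_degree, h4 v hx hy]
  have hnadj : ¬ Hᶜ.Adj v1 v2 := fun hh => hh.2 hadj
  obtain ⟨a, b, hab, hA⟩ := Finset.card_eq_two.mp (hd1 : (Hᶜ.neighborFinset v1).card = 2)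
  have haA : Hᶜ.Adj v1 a := by rw [← SimpleGraph.mem_neighborFinset, hA]; simp
  have hbA : Hᶜ.Adj v1 b := by rw [← SimpleGraph.mem_neighborFinset, hA]; simp
  have hav1 : a ≠ v1 := haA.ne'
  have hbv1 : b ≠ v1 := hbA.ne'
  have hav2 : a ≠ v2 := fun hh => hnadj (hh ▸ haA)
  have hbv2 : b ≠ v2 := fun hh => hnadj (hh ▸ hbA)
  have hnbra : Hᶜ.neighborFinset a = {v1} := nbrs_eq_singleton (hdo a hav1 hav2) haA.symm
  have hnbrb : Hᶜ.neighborFinset b = {v1} := nbrs_eq_singleton (hdo b hbv1 hbv2) hbA.symm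
  obtain ⟨c, d, hcd, hB⟩ := Finset.card_eq_two.mp (hd2 : (Hᶜ.neighborFinset v2).card = 2)
  have hcB : Hᶜ.Adj v2 c := by rw [← SimpleGraph.mem_neighborFinset, hB]; simp
  have hdB : Hᶜ.Adj v2 d := by rw [← SimpleGraph.mem_neighborFinset, hB]; simp
  have hcv2 : c ≠ v2 := hcB.ne'
  have hdv2 : d ≠ v2 := hdB.ne'
  have hcv1 : c ≠ v1 := fun hh => hnadj (hh ▸ hcB).symm
  have hdv1 : d ≠ v1 := fun hh => hnadj (hh ▸ hdB).symm
  have hnbrc : Hᶜ.neighborFinset c = {v2} := nbrs_eq_singleton (hdo c hcv1 hcv2) hcB.symm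
  have hnbrd : Hᶜ.neighborFinset d = {v2} := nbrs_eq_singleton (hdo d hdv1 hdv2) hdB.symm
  have hac : a ≠ c := by
    intro hh
    have : v2 ∈ Hᶜ.neighborFinset a := by
      rw [SimpleGraph.mem_neighborFinset]; exact hh ▸ hcB.symm
    rw [hnbra] at this
    have h21 : v2 = v1 := by simpa using this
    exact hv12 h21.symm
  have had : a ≠ d := by
    intro hh
    have : v2 ∈ Hᶜ.neighborFinset a := by
      rw [SimpleGraph.mem_neighborFinset]; exact hh ▸ hdB.symm
    rw [hnbra] at this
    have h21 : v2 = v1 := by simpa using this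
    exact hv12 h21.symm
  have hbc : b ≠ c := by
    intro hh
    have : v2 ∈ Hᶜ.neighborFinset b := by
      rw [SimpleGraph.mem_neighborFinset]; exact hh ▸ hcB.symm
    rw [hnbrb] at this
    have h21 : v2 = v1 := by simpa using this
    exact hv12 h21.symm
  have hbd : b ≠ d := by
    intro hh
    have : v2 ∈ Hᶜ.neighborFinset b := by
      rw [SimpleGraph.mem_neighborFinset]; exact hh ▸ hdB.symm
    rw [hnbrb] at this
    have h21 : v2 = v1 := by simpa using this
    exact hv12 h21.symm
  have hchar : ∀ u w : W, Hᶜ.Adj u w ↔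
      ((u = v1 ∧ (w = a ∨ w = b)) ∨ (w = v1 ∧ (u = a ∨ u = b)) ∨
        (u = v2 ∧ (w = c ∨ w = d)) ∨ (w = v2 ∧ (u = c ∨ u = d))) := by
    intro u w
    constructor
    · intro huw
      rcases six_exhaust hW v1 v2 a b c d hv12 hav1.symm hbv1.symm hcv1.symm hdv1.symm
        hav2.symm hbv2.symm hcv2.symm hdv2.symm hab hac had hbc hbd hcd u with h|h|h|h|h|h
      · subst h
        have hw : w ∈ ({a, b} : Finset W) := by
          rw [← hA, SimpleGraph.mem_neighborFinset]; exact huw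
        rcases Finset.mem_insert.mp hw with rfl | hw
        · exact Or.inl ⟨rfl, Or.inl rfl⟩
        · exact Or.inl ⟨rfl, Or.inr (Finset.mem_singleton.mp hw)⟩
      · subst h
        have hw : w ∈ ({c, d} : Finset W) := by
          rw [← hB, SimpleGraph.mem_neighborFinset]; exact huw
        rcases Finset.mem_insert.mp hw with rfl | hw
        · exact Or.inr (Or.inr (Or.inl ⟨rfl, Or.inl rfl⟩))
        · exact Or.inr (Or.inr (Or.inl ⟨rfl, Or.inr (Finset.mem_singleton.mp hw)⟩))
      · subst h
        have hw : w ∈ ({v1} : Finset W) := by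
          rw [← hnbra, SimpleGraph.mem_neighborFinset]; exact huw
        exact Or.inr (Or.inl ⟨Finset.mem_singleton.mp hw, Or.inl rfl⟩)
      · subst h
        have hw : w ∈ ({v1} : Finset W) := by
          rw [← hnbrb, SimpleGraph.mem_neighborFinset]; exact huw
        exact Or.inr (Or.inl ⟨Finset.mem_singleton.mp hw, Or.inr rfl⟩)
      · subst h
        have hw : w ∈ ({v2} : Finset W) := by
          rw [← hnbrc, SimpleGraph.mem_neighborFinset]; exact huw
        exact Or.inr (Or.inr (Or.inr ⟨Finset.mem_singleton.mp hw, Or.inl rfl⟩))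
      · subst h
        have hw : w ∈ ({v2} : Finset W) := by
          rw [← hnbrd, SimpleGraph.mem_neighborFinset]; exact huw
        exact Or.inr (Or.inr (Or.inr ⟨Finset.mem_singleton.mp hw, Or.inr rfl⟩))
    · rintro (⟨rfl, rfl|rfl⟩|⟨rfl, rfl|rfl⟩|⟨rfl, rfl|rfl⟩|⟨rfl, rfl|rfl⟩)
      exacts [haA, hbA, haA.symm, hbA.symm, hcB, hdB, hcB.symm, hdB.symm]
  have hnodup : ([v1, v2, a, b, c, d] : List W).Nodup := by
    simp only [List.nodup_cons, List.mem_cons, List.mem_singleton, List.not_mem_nil,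
      List.nodup_nil, or_false, not_or, and_true, List.mem_nil_iff]
    exact ⟨⟨hv12, Ne.symm hav1, Ne.symm hbv1, Ne.symm hcv1, Ne.symm hdv1⟩,
      ⟨Ne.symm hav2, Ne.symm hbv2, Ne.symm hcv2, Ne.symm hdv2⟩,
      ⟨hab, hac, had⟩, ⟨hbc, hbd⟩, hcd, not_false⟩
  obtain ⟨x, hinj, hx0, hx1, hx2, hx3, hx4, hx5⟩ :
      ∃ x : Fin 6 → W, Function.Injective x ∧ x 0 = v1 ∧ x 1 = v2 ∧ x 2 = a ∧ x 3 = b ∧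
        x 4 = c ∧ x 5 = d :=
    ⟨fun i => ([v1, v2, a, b, c, d] : List W).get i,
      List.nodup_iff_injective_get.mp hnodup, rfl, rfl, rfl, rfl, rfl, rfl⟩
  refine ⟨x, hinj, ?_⟩
  intro i j
  rw [compl_adj_iff, hchar, ← hx0, ← hx1, ← hx2, ← hx3, ← hx4, ← hx5]
  simp only [ne_eq, hinj.eq_iff, PatII]
  try tauto

set_option maxHeartbeats 1000000 in
lemma charIII {W : Type} [Fintype W] [DecidableEq W] (hW : Fintype.card W = 6)
    (H : SimpleGraph W) [DecidableRel H.Adj]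
    (h : caseIII H) :
    ∃ x : Fin 6 → W, Function.Injective x ∧
      ∀ i j, H.Adj (x i) (x j) ↔ (i ≠ j ∧ ¬ PatIII i j) := by
  obtain ⟨v1, v2, hv12, hnadj, h3a, h3b, h4⟩ := h
  have hdegK : ∀ v : W, Hᶜ.degree v = 5 - H.degree v := fun v => compl_deg hW H v
  have hd1 : Hᶜ.degree v1 = 2 := by rw [hdegK, ← ndeg_eq_degree, h3a]
  have hd2 : Hᶜ.degree v2 = 2 := by rw [hdegK, ← ndeg_eq_degree, h3b]
  have hdo : ∀ v, v ≠ v1 → v ≠ v2 → Hᶜ.degree v = 1 := fun v hx hy => by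
    rw [hdegK, ← ndeg_eq_degree, h4 v hx hy]
  have hKadj : Hᶜ.Adj v1 v2 := ⟨hv12, hnadj⟩
  -- the second neighbor of v1
  have hmem2 : v2 ∈ Hᶜ.neighborFinset v1 := by rw [SimpleGraph.mem_neighborFinset]; exact hKadj
  have hd1' : (Hᶜ.neighborFinset v1).card = 2 := hd1
  have he1 : ((Hᶜ.neighborFinset v1).erase v2).card = 1 := by
    rw [Finset.card_erase_of_mem hmem2, hd1']
  obtain ⟨a, ha⟩ := Finset.card_eq_one.mp he1
  have haE : a ∈ (Hᶜ.neighborFinset v1).erase v2 := ha ▸ Finset.mem_singleton_self a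
  have hav2 : a ≠ v2 := (Finset.mem_erase.mp haE).1
  have haA : Hᶜ.Adj v1 a := by
    have := (Finset.mem_erase.mp haE).2; rwa [SimpleGraph.mem_neighborFinset] at this
  have hA : Hᶜ.neighborFinset v1 = {v2, a} := by
    rw [← Finset.insert_erase hmem2, ha]
  -- the second neighbor of v2
  have hmem1 : v1 ∈ Hᶜ.neighborFinset v2 := by
    rw [SimpleGraph.mem_neighborFinset]; exact hKadj.symm
  have hd2' : (Hᶜ.neighborFinset v2).card = 2 := hd2
  have he2 : ((Hᶜ.neighborFinset v2).erase v1).card = 1 := by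
    rw [Finset.card_erase_of_mem hmem1, hd2']
  obtain ⟨b, hbb⟩ := Finset.card_eq_one.mp he2
  have hbE : b ∈ (Hᶜ.neighborFinset v2).erase v1 := hbb ▸ Finset.mem_singleton_self b
  have hbv1 : b ≠ v1 := (Finset.mem_erase.mp hbE).1
  have hbB : Hᶜ.Adj v2 b := by
    have := (Finset.mem_erase.mp hbE).2; rwa [SimpleGraph.mem_neighborFinset] at this
  have hB : Hᶜ.neighborFinset v2 = {v1, b} := by
    rw [← Finset.insert_erase hmem1, hbb]
  have hav1 : a ≠ v1 := haA.ne'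
  have hbv2 : b ≠ v2 := hbB.ne'
  have hnbra : Hᶜ.neighborFinset a = {v1} := nbrs_eq_singleton (hdo a hav1 hav2) haA.symm
  have hnbrb : Hᶜ.neighborFinset b = {v2} := nbrs_eq_singleton (hdo b hbv1 hbv2) hbB.symm
  have hab : a ≠ b := by
    intro hh
    have : v2 ∈ Hᶜ.neighborFinset a := by
      rw [SimpleGraph.mem_neighborFinset]; exact hh ▸ hbB.symm
    rw [hnbra] at this
    have h21 : v2 = v1 := by simpa using this
    exact hv12 h21.symm
  -- the remaining two vertices
  have hM2 : (univ \ ({v1, v2, a, b} : Finset W)).card = 2 := by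
    rw [Finset.card_sdiff_of_subset (subset_univ _), card_univ, hW]
    rw [card_insert_of_notMem (by simp [hv12, hav1.symm, hbv1.symm]),
      card_insert_of_notMem (by simp [hav2.symm, hbv2.symm]),
      card_insert_of_notMem (by simp [hab]), card_singleton]
  obtain ⟨c, d, hcd, hM⟩ := Finset.card_eq_two.mp hM2
  have hcM : c ∈ univ \ ({v1, v2, a, b} : Finset W) := by rw [hM]; exact mem_insert_self _ _
  have hdM : d ∈ univ \ ({v1, v2, a, b} : Finset W) := by
    rw [hM]; exact mem_insert_of_mem (mem_singleton_self _)
  obtain ⟨hcv1, hcv2, hca, hcb⟩ : c ≠ v1 ∧ c ≠ v2 ∧ c ≠ a ∧ c ≠ b := by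
    simpa [not_or] using (Finset.mem_sdiff.mp hcM).2
  obtain ⟨hdv1, hdv2, hda, hdb⟩ : d ≠ v1 ∧ d ≠ v2 ∧ d ≠ a ∧ d ≠ b := by
    simpa [not_or] using (Finset.mem_sdiff.mp hdM).2
  have hdeg_c : Hᶜ.degree c = 1 := hdo c hcv1 hcv2
  have hcd' : Hᶜ.Adj c d := by
    obtain ⟨x, hx⟩ := Finset.card_eq_one.mp (hdeg_c : (Hᶜ.neighborFinset c).card = 1)
    have hxc : Hᶜ.Adj c x := by rw [← SimpleGraph.mem_neighborFinset, hx]; simp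
    have hxv1 : x ≠ v1 := by
      intro hh; rw [hh] at hxc
      have : c ∈ Hᶜ.neighborFinset v1 := by rw [SimpleGraph.mem_neighborFinset]; exact hxc.symm
      rw [hA] at this; simp at this; rcases this with h|h
      exacts [hcv2 h, hca h]
    have hxv2 : x ≠ v2 := by
      intro hh; rw [hh] at hxc
      have : c ∈ Hᶜ.neighborFinset v2 := by rw [SimpleGraph.mem_neighborFinset]; exact hxc.symm
      rw [hB] at this; simp at this; rcases this with h|h
      exacts [hcv1 h, hcb h]
    have hxa : x ≠ a := by
      intro hh; rw [hh] at hxc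
      have : c ∈ Hᶜ.neighborFinset a := by rw [SimpleGraph.mem_neighborFinset]; exact hxc.symm
      rw [hnbra] at this; exact hcv1 (by simpa using this)
    have hxb : x ≠ b := by
      intro hh; rw [hh] at hxc
      have : c ∈ Hᶜ.neighborFinset b := by rw [SimpleGraph.mem_neighborFinset]; exact hxc.symm
      rw [hnbrb] at this; exact hcv2 (by simpa using this)
    have hxde : x = c ∨ x = d ∨ x = v1 ∨ x = v2 ∨ x = a ∨ x = b :=
      (six_exhaust hW c d v1 v2 a b hcd hcv1 hcv2 hca hcb hdv1 hdv2 hda hdb hv12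
        hav1.symm hbv1.symm hav2.symm hbv2.symm hab x).imp id id
    have : x = d := by
      rcases hxde with h|h|h|h|h|h
      · exact absurd (h ▸ hxc) (Hᶜ.irrefl ·)
      · exact h
      · exact absurd h hxv1
      · exact absurd h hxv2
      · exact absurd h hxa
      · exact absurd h hxb
    exact this ▸ hxc
  have hnbrc : Hᶜ.neighborFinset c = {d} := nbrs_eq_singleton hdeg_c hcd'
  have hnbrd : Hᶜ.neighborFinset d = {c} := nbrs_eq_singleton (hdo d hdv1 hdv2) hcd'.symm
  have hchar : ∀ u w : W, Hᶜ.Adj u w ↔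
      ((u = v1 ∧ (w = v2 ∨ w = a)) ∨ (w = v1 ∧ (u = v2 ∨ u = a)) ∨
        (u = v2 ∧ w = b) ∨ (w = v2 ∧ u = b) ∨ (u = c ∧ w = d) ∨ (u = d ∧ w = c)) := by
    intro u w
    constructor
    · intro huw
      rcases six_exhaust hW v1 v2 a b c d hv12 hav1.symm hbv1.symm hcv1.symm hdv1.symm
        hav2.symm hbv2.symm hcv2.symm hdv2.symm hab hca.symm hda.symm hcb.symm hdb.symm
        hcd u with h|h|h|h|h|h
      · subst h
        have hw : w ∈ ({v2, a} : Finset W) := by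
          rw [← hA, SimpleGraph.mem_neighborFinset]; exact huw
        rcases Finset.mem_insert.mp hw with rfl | hw
        · exact Or.inl ⟨rfl, Or.inl rfl⟩
        · exact Or.inl ⟨rfl, Or.inr (Finset.mem_singleton.mp hw)⟩
      · subst h
        have hw : w ∈ ({v1, b} : Finset W) := by
          rw [← hB, SimpleGraph.mem_neighborFinset]; exact huw
        rcases Finset.mem_insert.mp hw with rfl | hw
        · exact Or.inr (Or.inl ⟨rfl, Or.inl rfl⟩)
        · exact Or.inr (Or.inr (Or.inl ⟨rfl, Finset.mem_singleton.mp hw⟩))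
      · subst h
        have hw : w ∈ ({v1} : Finset W) := by
          rw [← hnbra, SimpleGraph.mem_neighborFinset]; exact huw
        exact Or.inr (Or.inl ⟨Finset.mem_singleton.mp hw, Or.inr rfl⟩)
      · subst h
        have hw : w ∈ ({v2} : Finset W) := by
          rw [← hnbrb, SimpleGraph.mem_neighborFinset]; exact huw
        exact Or.inr (Or.inr (Or.inr (Or.inl ⟨Finset.mem_singleton.mp hw, rfl⟩)))
      · subst h
        have hw : w ∈ ({d} : Finset W) := by
          rw [← hnbrc, SimpleGraph.mem_neighborFinset]; exact huw
        exact Or.inr (Or.inr (Or.inr (Or.inr (Or.inl ⟨rfl, Finset.mem_singleton.mp hw⟩))))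
      · subst h
        have hw : w ∈ ({c} : Finset W) := by
          rw [← hnbrd, SimpleGraph.mem_neighborFinset]; exact huw
        exact Or.inr (Or.inr (Or.inr (Or.inr (Or.inr ⟨rfl, Finset.mem_singleton.mp hw⟩))))
    · rintro (⟨rfl, rfl|rfl⟩|⟨rfl, rfl|rfl⟩|⟨rfl, rfl⟩|⟨rfl, rfl⟩|⟨rfl, rfl⟩|⟨rfl, rfl⟩)
      exacts [hKadj, haA, hKadj.symm, haA.symm, hbB, hbB.symm, hcd', hcd'.symm]
  have hnodup : ([v1, v2, a, b, c, d] : List W).Nodup := by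
    simp only [List.nodup_cons, List.mem_cons, List.mem_singleton, List.not_mem_nil,
      List.nodup_nil, or_false, not_or, and_true, List.mem_nil_iff]
    exact ⟨⟨hv12, Ne.symm hav1, Ne.symm hbv1, Ne.symm hcv1, Ne.symm hdv1⟩,
      ⟨Ne.symm hav2, Ne.symm hbv2, Ne.symm hcv2, Ne.symm hdv2⟩,
      ⟨hab, Ne.symm hca, Ne.symm hda⟩, ⟨Ne.symm hcb, Ne.symm hdb⟩, hcd, not_false⟩
  obtain ⟨x, hinj, hx0, hx1, hx2, hx3, hx4, hx5⟩ :
      ∃ x : Fin 6 → W, Function.Injective x ∧ x 0 = v1 ∧ x 1 = v2 ∧ x 2 = a ∧ x 3 = b ∧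
        x 4 = c ∧ x 5 = d :=
    ⟨fun i => ([v1, v2, a, b, c, d] : List W).get i,
      List.nodup_iff_injective_get.mp hnodup, rfl, rfl, rfl, rfl, rfl, rfl⟩
  refine ⟨x, hinj, ?_⟩
  intro i j
  rw [compl_adj_iff, hchar, ← hx0, ← hx1, ← hx2, ← hx3, ← hx4, ← hx5]
  simp only [ne_eq, hinj.eq_iff, PatIII]
  try tauto


section Part1

variable {V : Type} [Fintype V] [DecidableEq V]
    (G : SimpleGraph V) [DecidableRel G.Adj]
    (isVar : V → Prop) [DecidablePred isVar]

/-- satisfied checks adjacent to `v` -/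
def satAt (S : Finset V) (v : V) : Finset V :=
  univ.filter fun c => ¬ isVar c ∧ degIn G S c = 2 ∧ G.Adj v c

/-- unsatisfied checks adjacent to `v` -/
def unsatAt (S : Finset V) (v : V) : Finset V :=
  univ.filter fun c => ¬ isVar c ∧ degIn G S c = 1 ∧ G.Adj v c

lemma deg_split (hbip : ∀ u v, G.Adj u v → (isVar u ↔ ¬ isVar v))
    (hreg : ∀ v, isVar v → G.degree v = 4) (S : Finset V) (hSvar : ∀ v ∈ S, isVar v)
    (hets : ∀ c, ¬ isVar c → degIn G S c ≤ 2) {v : V} (hv : v ∈ S) :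
    (satAt G isVar S v).card + (unsatAt G isVar S v).card = 4 := by
  have hnb : G.neighborFinset v = satAt G isVar S v ∪ unsatAt G isVar S v := by
    ext c
    simp only [mem_neighborFinset, satAt, unsatAt, mem_union, mem_filter, mem_univ, true_and]
    constructor
    · intro hadj
      have hc : ¬ isVar c := (hbip v c hadj).mp (hSvar v hv)
      have h1 : 1 ≤ degIn G S c := by
        rw [degIn]
        exact card_pos.mpr ⟨v, mem_filter.mpr ⟨hv, hadj.symm⟩⟩
      have h2 := hets c hc
      rcases (by omega : degIn G S c = 1 ∨ degIn G S c = 2) with h | h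
      · exact Or.inr ⟨hc, h, hadj⟩
      · exact Or.inl ⟨hc, h, hadj⟩
    · rintro (⟨_, _, h⟩ | ⟨_, _, h⟩) <;> exact h
  have hdisj : Disjoint (satAt G isVar S v) (unsatAt G isVar S v) := by
    rw [Finset.disjoint_left]
    intro c h1 h2
    simp only [satAt, unsatAt, mem_filter] at h1 h2
    omega
  have := hreg v (hSvar v hv)
  rw [← card_union_of_disjoint hdisj, ← hnb]
  exact this

lemma ndeg_normal (hgirth : (6 : ℕ∞) ≤ G.egirth) (S : Finset V) {v : V} (hv : v ∈ S) :
    ndeg (normalGraph G isVar S) ⟨v, hv⟩ = (satAt G isVar S v).card := by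
  classical
  rw [ndeg, Set.ncard_eq_toFinset_card']
  have hother : ∀ c ∈ satAt G isVar S v, ∃ w, w ∈ S ∧ w ≠ v ∧ G.Adj c w := by
    intro c hc
    obtain ⟨-, hcv, h2, hadj⟩ := mem_filter.mp hc
    have hvmem : v ∈ S.filter (fun w => G.Adj c w) := mem_filter.mpr ⟨hv, hadj.symm⟩
    have h1 : ((S.filter (fun w => G.Adj c w)).erase v).card = 1 := by
      rw [card_erase_of_mem hvmem]
      have : degIn G S c = 2 := h2
      rw [degIn] at this
      omega
    obtain ⟨w, hw⟩ := card_eq_one.mp h1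
    have hwmem : w ∈ (S.filter (fun w => G.Adj c w)).erase v := hw ▸ mem_singleton_self w
    obtain ⟨hwv, hwf⟩ := mem_erase.mp hwmem
    obtain ⟨hwS, hcw⟩ := mem_filter.mp hwf
    exact ⟨w, hwS, hwv, hcw⟩
  have hunique : ∀ c, G.Adj c v → degIn G S c = 2 → ∀ w, w ∈ S → w ≠ v → G.Adj c w →
      ∀ w', w' ∈ S → w' ≠ v → G.Adj c w' → w = w' := by
    intro c hcv h2 w hwS hwv hcw w' hw'S hw'v hcw'
    have hsub : ({v, w} : Finset V) ⊆ S.filter (fun z => G.Adj c z) := by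
      intro z hz
      rcases mem_insert.mp hz with rfl | hz
      · exact mem_filter.mpr ⟨hv, hcv⟩
      · have hzw := mem_singleton.mp hz
        subst hzw
        exact mem_filter.mpr ⟨hwS, hcw⟩
    have hcard2 : ({v, w} : Finset V).card = 2 := by
      rw [card_insert_of_notMem (by simp [hwv.symm, Ne.symm]), card_singleton]
    have heq : ({v, w} : Finset V) = S.filter (fun z => G.Adj c z) := by
      apply eq_of_subset_of_card_le hsub
      rw [hcard2]
      exact le_of_eq h2
    have : w' ∈ ({v, w} : Finset V) := heq ▸ mem_filter.mpr ⟨hw'S, hcw'⟩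
    rcases mem_insert.mp this with h | h
    · exact absurd h hw'v
    · exact (mem_singleton.mp h).symm
  refine (Finset.card_bij
    (fun c hc => (⟨(hother c hc).choose, (hother c hc).choose_spec.1⟩ : {x // x ∈ S}))
    ?_ ?_ ?_).symm
  · intro c hc
    obtain ⟨hwS, hwv, hcw⟩ := (hother c hc).choose_spec
    obtain ⟨-, hcv, h2, hadj⟩ := mem_filter.mp hc
    rw [Set.mem_toFinset, SimpleGraph.mem_neighborSet]
    rw [normalGraph, SimpleGraph.fromRel_adj]
    refine ⟨fun hh => hwv (congrArg Subtype.val hh).symm, Or.inl ⟨c, hcv, h2, hadj.symm, hcw⟩⟩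
  · intro c1 hc1 c2 hc2 heq
    by_contra hne
    obtain ⟨hwS1, hwv1, hcw1⟩ := (hother c1 hc1).choose_spec
    obtain ⟨hwS2, hwv2, hcw2⟩ := (hother c2 hc2).choose_spec
    obtain ⟨-, -, -, hadj1⟩ := mem_filter.mp hc1
    obtain ⟨-, -, -, hadj2⟩ := mem_filter.mp hc2
    have hw12 : (hother c1 hc1).choose = (hother c2 hc2).choose := by
      simpa using congrArg Subtype.val heq
    have hcd : G.Adj (hother c1 hc1).choose c2 := by rw [hw12]; exact hcw2.symm
    exact no4cycle G hgirth hadj1 hcw1 hcd hadj2.symm (Ne.symm hwv1) hne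
  · rintro ⟨w, hwS⟩ hb
    rw [Set.mem_toFinset, SimpleGraph.mem_neighborSet] at hb
    rw [normalGraph, SimpleGraph.fromRel_adj] at hb
    obtain ⟨hne, hrel⟩ := hb
    have hwv : w ≠ v := fun h => hne (Subtype.ext h.symm)
    have hc : ∃ c, ¬ isVar c ∧ degIn G S c = 2 ∧ G.Adj c v ∧ G.Adj c w := by
      rcases hrel with ⟨c, h1, h2, h3, h4⟩ | ⟨c, h1, h2, h3, h4⟩
      · exact ⟨c, h1, h2, h3, h4⟩
      · exact ⟨c, h1, h2, h4, h3⟩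
    obtain ⟨c, hcv, h2, hcvadj, hcwadj⟩ := hc
    have hcmem : c ∈ satAt G isVar S v := mem_filter.mpr ⟨mem_univ c, hcv, h2, hcvadj.symm⟩
    refine ⟨c, hcmem, ?_⟩
    obtain ⟨hwS', hwv', hcw'⟩ := (hother c hcmem).choose_spec
    exact Subtype.ext (hunique c hcvadj h2 _ hwS' hwv' hcw' w hwS hwv hcwadj)

lemma unsat_sum (S : Finset V)
    (hb : (univ.filter fun c => ¬ isVar c ∧ degIn G S c = 1).card = 2) :
    ∑ v ∈ S, (unsatAt G isVar S v).card = 2 := by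
  classical
  set U := univ.filter fun c => ¬ isVar c ∧ degIn G S c = 1 with hU
  have h1 : ∀ v, unsatAt G isVar S v = U.filter (fun c => G.Adj v c) := by
    intro v
    rw [hU, filter_filter]
    apply filter_congr
    intro c _
    tauto
  calc ∑ v ∈ S, (unsatAt G isVar S v).card
      = ∑ v ∈ S, ∑ c ∈ U, if G.Adj v c then 1 else 0 := by
        refine Finset.sum_congr rfl fun v _ => ?_
        rw [h1, card_filter]
    _ = ∑ c ∈ U, ∑ v ∈ S, if G.Adj v c then 1 else 0 := Finset.sum_comm
    _ = ∑ c ∈ U, degIn G S c := by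
        refine Finset.sum_congr rfl fun c _ => ?_
        rw [degIn, card_filter]
        exact Finset.sum_congr rfl fun v _ => if_congr (G.adj_comm v c) rfl rfl
    _ = ∑ c ∈ U, 1 := by
        refine Finset.sum_congr rfl fun c hc => ?_
        exact (mem_filter.mp hc).2.2
    _ = U.card := by rw [Finset.sum_const, smul_eq_mul, mul_one]
    _ = 2 := hb

end Part1

lemma part1 {V : Type} [Fintype V] [DecidableEq V]
    (G : SimpleGraph V) [DecidableRel G.Adj]
    (isVar : V → Prop) [DecidablePred isVar]
    (hbip : ∀ u v, G.Adj u v → (isVar u ↔ ¬ isVar v))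
    (hreg : ∀ v, isVar v → G.degree v = 4)
    (hgirth : (6 : ℕ∞) ≤ G.egirth)
    (S : Finset V) (hSvar : ∀ v ∈ S, isVar v)
    (hets : ∀ c, ¬ isVar c → degIn G S c ≤ 2)
    (hb : (univ.filter fun c => ¬ isVar c ∧ degIn G S c = 1).card = 2)
    (hT : ∀ v ∈ S, 2 ≤ (univ.filter fun c => ¬ isVar c ∧ degIn G S c = 2 ∧ G.Adj v c).card) :
    caseI (normalGraph G isVar S) ∨ caseII (normalGraph G isVar S) ∨
      caseIII (normalGraph G isVar S) := by
  have hsplit : ∀ v ∈ S, (satAt G isVar S v).card + (unsatAt G isVar S v).card = 4 :=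
    fun v hv => deg_split G isVar hbip hreg S hSvar hets hv
  have hndeg : ∀ v (hv : v ∈ S),
      ndeg (normalGraph G isVar S) ⟨v, hv⟩ = (satAt G isVar S v).card :=
    fun v hv => ndeg_normal G isVar hgirth S hv
  have hsum := unsat_sum G isVar S hb
  have hsat2 : ∀ v ∈ S, 2 ≤ (satAt G isVar S v).card := hT
  by_cases hA : ∃ v0 ∈ S, (unsatAt G isVar S v0).card = 2
  · obtain ⟨v0, hv0, hu2⟩ := hA
    left
    refine ⟨⟨v0, hv0⟩, ?_, ?_⟩
    · rw [hndeg v0 hv0]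
      have := hsplit v0 hv0
      omega
    · rintro ⟨v, hv⟩ hne
      have hvne : v ≠ v0 := fun h => hne (Subtype.ext h)
      have hrest : ∑ w ∈ S.erase v0, (unsatAt G isVar S w).card = 0 := by
        have h : (unsatAt G isVar S v0).card + ∑ w ∈ S.erase v0, (unsatAt G isVar S w).card
            = ∑ w ∈ S, (unsatAt G isVar S w).card := Finset.add_sum_erase S (fun w => (unsatAt G isVar S w).card) hv0
        omega
      have h0 : (unsatAt G isVar S v).card = 0 :=
        Finset.sum_eq_zero_iff.mp hrest v (mem_erase.mpr ⟨hvne, hv⟩)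
      rw [hndeg v hv]
      have := hsplit v hv
      omega
  · push_neg at hA
    have hle1 : ∀ v ∈ S, (unsatAt G isVar S v).card ≤ 1 := by
      intro v hv
      have h1 := hsplit v hv
      have h2 := hsat2 v hv
      have h3 := hA v hv
      omega
    set T := S.filter (fun v => (unsatAt G isVar S v).card = 1) with hTdef
    have hTcard : T.card = 2 := by
      have hh : ∑ v ∈ S, (unsatAt G isVar S v).card = T.card := by
        rw [hTdef, card_filter]
        refine Finset.sum_congr rfl fun v hv => ?_
        have h1 := hle1 v hv
        rcases (by omega : (unsatAt G isVar S v).card = 0 ∨ (unsatAt G isVar S v).card = 1)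
          with h | h <;> simp [h]
      omega
    obtain ⟨v1, v2, hv12, hTeq⟩ := card_eq_two.mp hTcard
    have hv1T : v1 ∈ T := hTeq ▸ mem_insert_self _ _
    have hv2T : v2 ∈ T := hTeq ▸ mem_insert_of_mem (mem_singleton_self _)
    have hv1S : v1 ∈ S := (mem_filter.mp hv1T).1
    have hv2S : v2 ∈ S := (mem_filter.mp hv2T).1
    have hu1 : (unsatAt G isVar S v1).card = 1 := (mem_filter.mp hv1T).2
    have hu2 : (unsatAt G isVar S v2).card = 1 := (mem_filter.mp hv2T).2
    have hothers : ∀ v ∈ S, v ≠ v1 → v ≠ v2 → (unsatAt G isVar S v).card = 0 := by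
      intro v hv h1 h2
      by_contra h
      have h1' : (unsatAt G isVar S v).card = 1 := by
        have := hle1 v hv
        omega
      have hvT : v ∈ T := mem_filter.mpr ⟨hv, h1'⟩
      rw [hTeq] at hvT
      rcases mem_insert.mp hvT with hh | hh
      · exact h1 hh
      · exact h2 (mem_singleton.mp hh)
    have hnd1 : ndeg (normalGraph G isVar S) ⟨v1, hv1S⟩ = 3 := by
      rw [hndeg v1 hv1S]
      have := hsplit v1 hv1S
      omega
    have hnd2 : ndeg (normalGraph G isVar S) ⟨v2, hv2S⟩ = 3 := by
      rw [hndeg v2 hv2S]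
      have := hsplit v2 hv2S
      omega
    have hsubne : (⟨v1, hv1S⟩ : {x // x ∈ S}) ≠ ⟨v2, hv2S⟩ :=
      fun h => hv12 (congrArg Subtype.val h)
    have hother4 : ∀ w : {x // x ∈ S}, w ≠ ⟨v1, hv1S⟩ → w ≠ ⟨v2, hv2S⟩ →
        ndeg (normalGraph G isVar S) w = 4 := by
      rintro ⟨v, hv⟩ h1 h2
      have h1' : v ≠ v1 := fun h => h1 (Subtype.ext h)
      have h2' : v ≠ v2 := fun h => h2 (Subtype.ext h)
      rw [hndeg v hv]
      have := hsplit v hv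
      have := hothers v hv h1' h2'
      omega
    by_cases hadj : (normalGraph G isVar S).Adj ⟨v1, hv1S⟩ ⟨v2, hv2S⟩
    · exact Or.inr (Or.inl ⟨_, _, hsubne, hadj, hnd1, hnd2, hother4⟩)
    · exact Or.inr (Or.inr ⟨_, _, hsubne, hadj, hnd1, hnd2, hother4⟩)


theorem stmt6 {V : Type} [Fintype V] [DecidableEq V]
    (G : SimpleGraph V) [DecidableRel G.Adj]
    (isVar : V → Prop) [DecidablePred isVar]
    (hbip : ∀ u v, G.Adj u v → (isVar u ↔ ¬ isVar v))
    (hreg : ∀ v, isVar v → G.degree v = 4)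
    (hgirth : (6 : ℕ∞) ≤ G.egirth)
    (S : Finset V) (hSvar : ∀ v ∈ S, isVar v) (hS6 : S.card = 6)
    (hets : ∀ c, ¬ isVar c → degIn G S c ≤ 2)
    (hb : (univ.filter fun c => ¬ isVar c ∧ degIn G S c = 1).card = 2)
    (hT : ∀ v ∈ S, 2 ≤ (univ.filter fun c => ¬ isVar c ∧ degIn G S c = 2 ∧ G.Adj v c).card) :
    (caseI (normalGraph G isVar S) ∨ caseII (normalGraph G isVar S) ∨
      caseIII (normalGraph G isVar S)) ∧
    (∀ (W W' : Type) [Fintype W] [Fintype W'],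
      Fintype.card W = 6 → Fintype.card W' = 6 →
      ∀ (H : SimpleGraph W) (H' : SimpleGraph W'),
        H.edgeSet.ncard = 11 → H'.edgeSet.ncard = 11 →
        ((caseI H ∧ caseI H') ∨ (caseII H ∧ caseII H') ∨ (caseIII H ∧ caseIII H')) →
        Nonempty (H ≃g H')) := by
  constructor
  · exact part1 G isVar hbip hreg hgirth S hSvar hets hb hT
  · intro W W' _ _ hW hW' H H' _ _ hcase
    letI := Classical.decEq W
    letI := Classical.decEq W'
    letI : DecidableRel H.Adj := Classical.decRel _
    letI : DecidableRel H'.Adj := Classical.decRel _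
    rcases hcase with ⟨hI, hI'⟩ | ⟨hII, hII'⟩ | ⟨hIII, hIII'⟩
    · obtain ⟨x, hxinj, hx⟩ := charI hW H hI
      obtain ⟨y, hyinj, hy⟩ := charI hW' H' hI'
      exact iso_of_maps hW hW' H H' x y hxinj hyinj _ hx hy
    · obtain ⟨x, hxinj, hx⟩ := charII hW H hII
      obtain ⟨y, hyinj, hy⟩ := charII hW' H' hII'
      exact iso_of_maps hW hW' H H' x y hxinj hyinj _ hx hy
    · obtain ⟨x, hxinj, hx⟩ := charIII hW H hIII
      obtain ⟨y, hyinj, hy⟩ := charIII hW' H' hIII'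
      exact iso_of_maps hW hW' H H' x y hxinj hyinj _ hx hy
end

section
/- In a variable-regular Tanner graph with variable node degree d_l, the map from elementary trapping sets to their normal graphs is injective on isomorphism classes: two elementary trapping sets have isomorphic induced subgraphs if and only if their normal graphs are isomorphic. -/
open SimpleGraph Finset

lemma nofour {V : Type} (G : SimpleGraph V) (hg : (6 : ℕ∞) ≤ G.egirth)
    {c c' u w : V} (hcc : c ≠ c') (huw : u ≠ w)
    (h1 : G.Adj c u) (h2 : G.Adj c w) (h3 : G.Adj c' u) (h4 : G.Adj c' w) : False := by
  let p : G.Walk c c := .cons h1 (.cons h3.symm (.cons h4 (.cons h2.symm .nil)))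
  have hc : p.IsCycle := by
    simp only [p, Walk.isCycle_def, Walk.isTrail_def, Walk.edges_cons, Walk.edges_nil,
      Walk.support_cons, Walk.support_nil, List.tail_cons, List.nodup_cons, List.nodup_nil,
      List.mem_cons, List.not_mem_nil, List.mem_singleton, Sym2.eq, Sym2.rel_iff']
    refine ⟨⟨?_, ?_, ?_, ?_⟩, ?_, ?_, ?_, ?_⟩ <;>
      simp_all [h1.ne, h2.ne, h3.ne, h4.ne, h1.ne', h2.ne', h3.ne', h4.ne', Prod.ext_iff] <;> tauto
  have := le_egirth.mp hg c p hc
  simp only [p, Walk.length_cons, Walk.length_nil] at this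
  norm_num at this

lemma uniq2 {V : Type} (G : SimpleGraph V) (hg : (6 : ℕ∞) ≤ G.egirth)
    {c c' u w : V} (huw : u ≠ w)
    (h1 : G.Adj c u) (h2 : G.Adj c w) (h3 : G.Adj c' u) (h4 : G.Adj c' w) : c = c' := by
  by_contra hcc
  exact nofour G hg hcc huw h1 h2 h3 h4

lemma degIn_pos {V : Type} [DecidableEq V] (G : SimpleGraph V) [DecidableRel G.Adj]
    {S : Finset V} {c v : V} (hvS : v ∈ S) (h : G.Adj c v) : 1 ≤ degIn G S c := by
  rw [Nat.succ_le_iff, degIn, card_pos]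
  exact ⟨v, mem_filter.mpr ⟨hvS, h⟩⟩

lemma pair2 {V : Type} [DecidableEq V] {G : SimpleGraph V} [DecidableRel G.Adj]
    {S : Finset V} {c : V} (h : degIn G S c = 2) :
    ∃ u w, u ≠ w ∧ u ∈ S ∧ w ∈ S ∧ G.Adj c u ∧ G.Adj c w ∧
      ∀ x ∈ S, G.Adj c x → x = u ∨ x = w := by
  obtain ⟨u, w, huw, hs⟩ := Finset.card_eq_two.mp h
  have hu : u ∈ S.filter (fun v => G.Adj c v) := by rw [hs]; simp
  have hw : w ∈ S.filter (fun v => G.Adj c v) := by rw [hs]; simp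
  simp only [mem_filter] at hu hw
  refine ⟨u, w, huw, hu.1, hw.1, hu.2, hw.2, fun x hx hadj => ?_⟩
  have : x ∈ S.filter (fun v => G.Adj c v) := mem_filter.mpr ⟨hx, hadj⟩
  rw [hs] at this; simpa using this

lemma single1 {V : Type} [DecidableEq V] {G : SimpleGraph V} [DecidableRel G.Adj]
    {S : Finset V} {c : V} (h : degIn G S c = 1) :
    ∃ v, v ∈ S ∧ G.Adj c v ∧ ∀ x ∈ S, G.Adj c x → x = v := by
  obtain ⟨v, hs⟩ := Finset.card_eq_one.mp h
  have hv : v ∈ S.filter (fun x => G.Adj c x) := by rw [hs]; simp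
  simp only [mem_filter] at hv
  refine ⟨v, hv.1, hv.2, fun x hx hadj => ?_⟩
  have : x ∈ S.filter (fun y => G.Adj c y) := mem_filter.mpr ⟨hx, hadj⟩
  rw [hs] at this; simpa using this

lemma normal_adj {V : Type} [DecidableEq V] {G : SimpleGraph V} [DecidableRel G.Adj]
    {isVar : V → Prop} {S : Finset V} {u w : {x // x ∈ S}} :
    (normalGraph G isVar S).Adj u w ↔ u ≠ w ∧
      ∃ c, ¬ isVar c ∧ degIn G S c = 2 ∧ G.Adj c u.1 ∧ G.Adj c w.1 := by
  rw [normalGraph, fromRel_adj]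
  constructor
  · rintro ⟨hne, h | h⟩
    · exact ⟨hne, h⟩
    · obtain ⟨c, h1, h2, h3, h4⟩ := h; exact ⟨hne, c, h1, h2, h4, h3⟩
  · rintro ⟨hne, h⟩; exact ⟨hne, Or.inl h⟩
def TD1 {V : Type} [Fintype V] [DecidableEq V] (G : SimpleGraph V) [DecidableRel G.Adj]
    (isVar : V → Prop) [DecidablePred isVar] (S : Finset V) (v : V) : Finset V :=
  univ.filter (fun c => ¬ isVar c ∧ degIn G S c = 1 ∧ G.Adj c v)

def TD2 {V : Type} [Fintype V] [DecidableEq V] (G : SimpleGraph V) [DecidableRel G.Adj]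
    (isVar : V → Prop) [DecidablePred isVar] (S : Finset V) (v : V) : Finset V :=
  univ.filter (fun c => ¬ isVar c ∧ degIn G S c = 2 ∧ G.Adj c v)

lemma count_lemma {V : Type} [Fintype V] [DecidableEq V] (G : SimpleGraph V) [DecidableRel G.Adj]
    (isVar : V → Prop) [DecidablePred isVar]
    (hbip : ∀ u v, G.Adj u v → (isVar u ↔ ¬ isVar v)) (dl : ℕ)
    (hreg : ∀ v, isVar v → G.degree v = dl)
    (S : Finset V) (hv : ∀ v ∈ S, isVar v)
    (hets : ∀ c, ¬ isVar c → degIn G S c ≤ 2)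
    {v : V} (hvS : v ∈ S) :
    (TD1 G isVar S v).card + (TD2 G isVar S v).card = dl := by
  have hvar : isVar v := hv v hvS
  have hunion : TD1 G isVar S v ∪ TD2 G isVar S v = univ.filter (fun c => G.Adj v c) := by
    ext c
    simp only [TD1, TD2, mem_union, mem_filter, mem_univ, true_and]
    constructor
    · rintro (⟨_, _, h⟩ | ⟨_, _, h⟩) <;> exact h.symm
    · intro hadj
      have hnv : ¬ isVar c := ((hbip v c hadj).mp hvar)
      have h1 : 1 ≤ degIn G S c := degIn_pos G hvS hadj.symm
      have h2 : degIn G S c ≤ 2 := hets c hnv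
      interval_cases h : degIn G S c
      · exact Or.inl ⟨hnv, rfl, hadj.symm⟩
      · exact Or.inr ⟨hnv, rfl, hadj.symm⟩
  have hdisj : Disjoint (TD1 G isVar S v) (TD2 G isVar S v) := by
    rw [Finset.disjoint_left]
    intro c hc1 hc2
    simp only [TD1, TD2, mem_filter] at hc1 hc2
    omega
  have := card_union_of_disjoint hdisj
  rw [hunion] at this
  rw [← this, ← hreg v hvar, degree, neighborFinset_eq_filter]
lemma var_memA {V : Type} [DecidableEq V] {G : SimpleGraph V} [DecidableRel G.Adj]
    {isVar : V → Prop} {S : Finset V}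
    (hbip : ∀ u v, G.Adj u v → (isVar u ↔ ¬ isVar v)) (hv : ∀ v ∈ S, isVar v)
    {x : V} (hx : x ∈ {x : V | x ∈ S ∨ ∃ v ∈ S, G.Adj x v}) (hvar : isVar x) : x ∈ S := by
  rcases hx with h | ⟨v, hvS, hadj⟩
  · exact h
  · exact absurd (hv v hvS) ((hbip x v hadj).mp hvar)

lemma check_memA_deg {V : Type} [DecidableEq V] {G : SimpleGraph V} [DecidableRel G.Adj]
    {isVar : V → Prop} {S : Finset V} (hv : ∀ v ∈ S, isVar v)
    {x : V} (hx : x ∈ {x : V | x ∈ S ∨ ∃ v ∈ S, G.Adj x v}) (hvar : ¬ isVar x) :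
    1 ≤ degIn G S x := by
  rcases hx with h | ⟨v, hvS, hadj⟩
  · exact absurd (hv x h) hvar
  · exact degIn_pos G hvS hadj

lemma memA_of_adj {V : Type} {G : SimpleGraph V} {S : Finset V} {x v : V}
    (hvS : v ∈ S) (h : G.Adj x v) : x ∈ {x : V | x ∈ S ∨ ∃ v ∈ S, G.Adj x v} :=
  Or.inr ⟨v, hvS, h⟩
/-- Build one direction of the Tanner-graph map from a vertex map `t` on the trapping sets
(coming from a normal-graph isomorphism) and a family `k` of maps on degree-1 checks. -/
lemma mk_map {V₁ V₂ : Type} [Fintype V₁] [DecidableEq V₁] [Fintype V₂] [DecidableEq V₂]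
    (G₁ : SimpleGraph V₁) [DecidableRel G₁.Adj] (G₂ : SimpleGraph V₂) [DecidableRel G₂.Adj]
    (isVar₁ : V₁ → Prop) [DecidablePred isVar₁] (isVar₂ : V₂ → Prop) [DecidablePred isVar₂]
    (hbip₁ : ∀ u v, G₁.Adj u v → (isVar₁ u ↔ ¬ isVar₁ v))
    (S₁ : Finset V₁) (S₂ : Finset V₂)
    (hv₁ : ∀ v ∈ S₁, isVar₁ v) (hv₂ : ∀ v ∈ S₂, isVar₂ v)
    (hets₁ : ∀ c, ¬ isVar₁ c → degIn G₁ S₁ c ≤ 2)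
    (t : {x // x ∈ S₁} → {x // x ∈ S₂})
    (texist : ∀ u w : {x // x ∈ S₁}, u ≠ w →
      (∃ c, ¬ isVar₁ c ∧ degIn G₁ S₁ c = 2 ∧ G₁.Adj c u.1 ∧ G₁.Adj c w.1) →
      ∃ c', ¬ isVar₂ c' ∧ degIn G₂ S₂ c' = 2 ∧ G₂.Adj c' (t u).1 ∧ G₂.Adj c' (t w).1)
    (k : ∀ v : {x // x ∈ S₁}, {c // c ∈ TD1 G₁ isVar₁ S₁ v.1} →
      {c // c ∈ TD1 G₂ isVar₂ S₂ (t v).1}) :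
    ∀ x : {x : V₁ // x ∈ {x : V₁ | x ∈ S₁ ∨ ∃ v ∈ S₁, G₁.Adj x v}},
    ∃ y : {y : V₂ // y ∈ {y : V₂ | y ∈ S₂ ∨ ∃ v ∈ S₂, G₂.Adj y v}},
      (∀ h : x.1 ∈ S₁, y.1 = (t ⟨x.1, h⟩).1) ∧
      ((¬ isVar₁ x.1) → degIn G₁ S₁ x.1 = 2 →
        (¬ isVar₂ y.1 ∧ degIn G₂ S₂ y.1 = 2 ∧
          ∀ v (hv : v ∈ S₁), G₁.Adj x.1 v → G₂.Adj y.1 (t ⟨v, hv⟩).1)) ∧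
      (∀ (v : V₁) (hv : v ∈ S₁) (hmem : x.1 ∈ TD1 G₁ isVar₁ S₁ v),
        y.1 = (k ⟨v, hv⟩ ⟨x.1, hmem⟩).1) := by
  rintro ⟨x, hx⟩
  by_cases hvar : isVar₁ x
  · -- variable node
    have hS : x ∈ S₁ := var_memA hbip₁ hv₁ hx hvar
    refine ⟨⟨(t ⟨x, hS⟩).1, Or.inl (t ⟨x, hS⟩).2⟩, fun h => rfl, fun hn _ => absurd hvar hn,
      fun v hv hmem => ?_⟩
    · simp only [TD1, mem_filter] at hmem
      exact absurd hvar hmem.2.1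
  · have hd1 : 1 ≤ degIn G₁ S₁ x := check_memA_deg hv₁ hx hvar
    have hd2 : degIn G₁ S₁ x ≤ 2 := hets₁ x hvar
    have hxS : x ∉ S₁ := fun h => hvar (hv₁ x h)
    by_cases hdeg : degIn G₁ S₁ x = 2
    · -- degree-2 check node
      obtain ⟨u, w, huw, hu, hw, hau, haw, hchar⟩ := pair2 hdeg
      have hne : (⟨u, hu⟩ : {x // x ∈ S₁}) ≠ ⟨w, hw⟩ := by
        simp only [ne_eq, Subtype.mk.injEq]; exact huw
      obtain ⟨c', hc1, hc2, hc3, hc4⟩ := texist ⟨u, hu⟩ ⟨w, hw⟩ hne ⟨x, hvar, hdeg, hau, haw⟩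
      refine ⟨⟨c', memA_of_adj (t ⟨u, hu⟩).2 hc3⟩, fun h => absurd h hxS,
        fun _ _ => ⟨hc1, hc2, fun v hv hadj => ?_⟩, fun v hv hmem => ?_⟩
      · rcases hchar v hv hadj with rfl | rfl
        · exact hc3
        · exact hc4
      · simp only [TD1, mem_filter] at hmem
        omega
    · -- degree-1 check node
      have hdeg1 : degIn G₁ S₁ x = 1 := by omega
      obtain ⟨v₀, hv₀, hav₀, huniq⟩ := single1 hdeg1
      have hmem₀ : x ∈ TD1 G₁ isVar₁ S₁ v₀ := by
        simp only [TD1, mem_filter]; exact ⟨mem_univ x, hvar, hdeg1, hav₀⟩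
      set y := k ⟨v₀, hv₀⟩ ⟨x, hmem₀⟩ with hy
      have hy2 := y.2
      simp only [TD1, mem_filter] at hy2
      refine ⟨⟨y.1, memA_of_adj (t ⟨v₀, hv₀⟩).2 hy2.2.2.2⟩, fun h => absurd h hxS,
        fun _ h2 => absurd h2 hdeg, fun v hv hmem => ?_⟩
      have hmv : v = v₀ := by
        simp only [TD1, mem_filter] at hmem
        exact huniq v hv hmem.2.2.2
      subst hmv
      rfl
lemma map_adj_preserve {V₁ V₂ : Type} [Fintype V₁] [DecidableEq V₁] [Fintype V₂] [DecidableEq V₂]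
    (G₁ : SimpleGraph V₁) [DecidableRel G₁.Adj] (G₂ : SimpleGraph V₂) [DecidableRel G₂.Adj]
    (isVar₁ : V₁ → Prop) [DecidablePred isVar₁] (isVar₂ : V₂ → Prop) [DecidablePred isVar₂]
    (hbip₁ : ∀ u v, G₁.Adj u v → (isVar₁ u ↔ ¬ isVar₁ v))
    (S₁ : Finset V₁) (S₂ : Finset V₂)
    (hv₁ : ∀ v ∈ S₁, isVar₁ v)
    (hets₁ : ∀ c, ¬ isVar₁ c → degIn G₁ S₁ c ≤ 2)
    (t : {x // x ∈ S₁} → {x // x ∈ S₂})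
    (k : ∀ v : {x // x ∈ S₁}, {c // c ∈ TD1 G₁ isVar₁ S₁ v.1} →
      {c // c ∈ TD1 G₂ isVar₂ S₂ (t v).1})
    (M : {x : V₁ // x ∈ {x : V₁ | x ∈ S₁ ∨ ∃ v ∈ S₁, G₁.Adj x v}} →
         {y : V₂ // y ∈ {y : V₂ | y ∈ S₂ ∨ ∃ v ∈ S₂, G₂.Adj y v}})
    (hM1 : ∀ x (h : x.1 ∈ S₁), (M x).1 = (t ⟨x.1, h⟩).1)
    (hM2 : ∀ x, (¬ isVar₁ x.1) → degIn G₁ S₁ x.1 = 2 →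
        (¬ isVar₂ (M x).1 ∧ degIn G₂ S₂ (M x).1 = 2 ∧
          ∀ v (hv : v ∈ S₁), G₁.Adj x.1 v → G₂.Adj (M x).1 (t ⟨v, hv⟩).1))
    (hM3 : ∀ x (v : V₁) (hv : v ∈ S₁) (hmem : x.1 ∈ TD1 G₁ isVar₁ S₁ v),
        (M x).1 = (k ⟨v, hv⟩ ⟨x.1, hmem⟩).1) :
    ∀ x y, (G₁.induce {x : V₁ | x ∈ S₁ ∨ ∃ v ∈ S₁, G₁.Adj x v}).Adj x y →
      (G₂.induce {y : V₂ | y ∈ S₂ ∨ ∃ v ∈ S₂, G₂.Adj y v}).Adj (M x) (M y) := by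
  -- first a helper: if x is a variable (in S₁) and y is an adjacent check, images adjacent
  have key : ∀ x y, (hS : x.1 ∈ S₁) → ¬ isVar₁ y.1 → G₁.Adj y.1 x.1 →
      G₂.Adj (M y).1 (M x).1 := by
    intro x y hS hny hadj
    have h1 : 1 ≤ degIn G₁ S₁ y.1 := degIn_pos G₁ hS hadj
    have h2 : degIn G₁ S₁ y.1 ≤ 2 := hets₁ y.1 hny
    rw [hM1 x hS]
    by_cases hdeg : degIn G₁ S₁ y.1 = 2
    · exact (hM2 y hny hdeg).2.2 x.1 hS hadj
    · have hdeg1 : degIn G₁ S₁ y.1 = 1 := by omega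
      have hmem : y.1 ∈ TD1 G₁ isVar₁ S₁ x.1 := by
        simp only [TD1, mem_filter]; exact ⟨mem_univ _, hny, hdeg1, hadj⟩
      have := (k ⟨x.1, hS⟩ ⟨y.1, hmem⟩).2
      simp only [TD1, mem_filter] at this
      rw [hM3 y x.1 hS hmem]
      exact this.2.2.2
  intro x y hadj
  simp only [comap_adj, Function.Embedding.coe_subtype] at hadj ⊢
  by_cases hvx : isVar₁ x.1
  · have hny : ¬ isVar₁ y.1 := (hbip₁ x.1 y.1 hadj).mp hvx
    have hS : x.1 ∈ S₁ := var_memA hbip₁ hv₁ x.2 hvx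
    exact (key x y hS hny hadj.symm).symm
  · have hvy : isVar₁ y.1 := by
      have := hbip₁ x.1 y.1 hadj
      tauto
    have hS : y.1 ∈ S₁ := var_memA hbip₁ hv₁ y.2 hvy
    exact key y x hS hvx hadj
lemma deg2_other {V : Type} [DecidableEq V] {G : SimpleGraph V} [DecidableRel G.Adj]
    {S : Finset V} {c v : V} (h : degIn G S c = 2) (hvS : v ∈ S) (hadj : G.Adj c v) :
    ∃ w, w ∈ S ∧ w ≠ v ∧ G.Adj c w ∧ ∀ x ∈ S, G.Adj c x → x = v ∨ x = w := by
  obtain ⟨u, w, huw, hu, hw, hau, haw, hchar⟩ := pair2 h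
  rcases hchar v hvS hadj with rfl | rfl
  · exact ⟨w, hw, huw.symm, haw, hchar⟩
  · exact ⟨u, hu, huw, hau, fun x hx ha => (hchar x hx ha).symm⟩

section Iso

variable {V₁ V₂ : Type} [Fintype V₁] [DecidableEq V₁] [Fintype V₂] [DecidableEq V₂]
    {G₁ : SimpleGraph V₁} [DecidableRel G₁.Adj] {G₂ : SimpleGraph V₂} [DecidableRel G₂.Adj]
    {isVar₁ : V₁ → Prop} [DecidablePred isVar₁] {isVar₂ : V₂ → Prop} [DecidablePred isVar₂]
    {S₁ : Finset V₁} {S₂ : Finset V₂}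

lemma iso_texist (ψ : normalGraph G₁ isVar₁ S₁ ≃g normalGraph G₂ isVar₂ S₂) :
    ∀ u w : {x // x ∈ S₁}, u ≠ w →
      (∃ c, ¬ isVar₁ c ∧ degIn G₁ S₁ c = 2 ∧ G₁.Adj c u.1 ∧ G₁.Adj c w.1) →
      ∃ c', ¬ isVar₂ c' ∧ degIn G₂ S₂ c' = 2 ∧ G₂.Adj c' (ψ u).1 ∧ G₂.Adj c' (ψ w).1 := by
  intro u w hne hex
  have h1 : (normalGraph G₁ isVar₁ S₁).Adj u w := normal_adj.mpr ⟨hne, hex⟩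
  have h2 : (normalGraph G₂ isVar₂ S₂).Adj (ψ u) (ψ w) := ψ.map_rel_iff.mpr h1
  exact (normal_adj.mp h2).2

lemma iso_td2_card (hg₁ : (6 : ℕ∞) ≤ G₁.egirth) (hg₂ : (6 : ℕ∞) ≤ G₂.egirth)
    (ψ : normalGraph G₁ isVar₁ S₁ ≃g normalGraph G₂ isVar₂ S₂) (v : {x // x ∈ S₁}) :
    (TD2 G₁ isVar₁ S₁ v.1).card = (TD2 G₂ isVar₂ S₂ (ψ v).1).card := by
  have hinj : Function.Injective ψ := EquivLike.injective ψ
  have key2 : ∀ c ∈ TD2 G₁ isVar₁ S₁ v.1, ∃ c', c' ∈ TD2 G₂ isVar₂ S₂ (ψ v).1 ∧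
      ∀ x (hx : x ∈ S₁), G₁.Adj c x → G₂.Adj c' (ψ ⟨x, hx⟩).1 := by
    intro c hc
    simp only [TD2, mem_filter] at hc
    obtain ⟨-, hnc, hdeg, hadjv⟩ := hc
    obtain ⟨u, w, huw, hu, hw, hau, haw, hchar⟩ := pair2 hdeg
    have hne : (⟨u, hu⟩ : {x // x ∈ S₁}) ≠ ⟨w, hw⟩ := by
      simp only [ne_eq, Subtype.mk.injEq]; exact huw
    obtain ⟨c', h1, h2, h3, h4⟩ := iso_texist ψ ⟨u, hu⟩ ⟨w, hw⟩ hne ⟨c, hnc, hdeg, hau, haw⟩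
    have hall : ∀ x (hx : x ∈ S₁), G₁.Adj c x → G₂.Adj c' (ψ ⟨x, hx⟩).1 := by
      intro x hx hadj
      rcases hchar x hx hadj with rfl | rfl
      · exact h3
      · exact h4
    have hadj' : G₂.Adj c' (ψ v).1 := hall v.1 v.2 hadjv
    refine ⟨c', ?_, hall⟩
    simp only [TD2, mem_filter]
    exact ⟨mem_univ _, h1, h2, hadj'⟩
  choose! partner hpmem hpadj using key2
  apply Finset.card_bij partner hpmem
  · -- injective
    intro a₁ ha₁ a₂ ha₂ heq
    have hm₁ := ha₁; have hm₂ := ha₂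
    simp only [TD2, mem_filter] at hm₁ hm₂
    obtain ⟨w₁, hw₁S, hw₁ne, hw₁adj, -⟩ := deg2_other hm₁.2.2.1 v.2 hm₁.2.2.2
    obtain ⟨w₂, hw₂S, hw₂ne, hw₂adj, -⟩ := deg2_other hm₂.2.2.1 v.2 hm₂.2.2.2
    have hp1 := hpmem a₁ ha₁
    simp only [TD2, mem_filter] at hp1
    obtain ⟨w', hw'S, hw'ne, hw'adj, hchar'⟩ := deg2_other hp1.2.2.1 (ψ v).2 hp1.2.2.2
    have hψne : ∀ w (hwS : w ∈ S₁), w ≠ v.1 → (ψ ⟨w, hwS⟩).1 ≠ (ψ v).1 := by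
      intro w hwS hne heq2
      exact hne (congrArg Subtype.val (hinj (Subtype.ext heq2)))
    have he₁ : (ψ ⟨w₁, hw₁S⟩).1 = w' := by
      rcases hchar' (ψ ⟨w₁, hw₁S⟩).1 (ψ ⟨w₁, hw₁S⟩).2 (hpadj a₁ ha₁ w₁ hw₁S hw₁adj) with h | h
      · exact absurd h (hψne w₁ hw₁S hw₁ne)
      · exact h
    have he₂ : (ψ ⟨w₂, hw₂S⟩).1 = w' := by
      rw [heq] at *
      rcases hchar' (ψ ⟨w₂, hw₂S⟩).1 (ψ ⟨w₂, hw₂S⟩).2 (hpadj a₂ ha₂ w₂ hw₂S hw₂adj) with h | h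
      · exact absurd h (hψne w₂ hw₂S hw₂ne)
      · exact h
    have : w₁ = w₂ := by
      have := hinj (Subtype.ext (he₁.trans he₂.symm))
      exact congrArg Subtype.val this
    subst this
    exact uniq2 G₁ hg₁ (Ne.symm hw₁ne) hm₁.2.2.2 hw₁adj hm₂.2.2.2 hw₂adj
  · -- surjective
    intro c' hc'
    have hm := hc'
    simp only [TD2, mem_filter] at hm
    obtain ⟨-, hnc', hdeg', hadj'⟩ := hm
    obtain ⟨w', hw'S, hw'ne, hw'adj, -⟩ := deg2_other hdeg' (ψ v).2 hadj'
    set W : {x // x ∈ S₁} := ψ.symm ⟨w', hw'S⟩ with hW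
    have hψW : ψ W = ⟨w', hw'S⟩ := ψ.apply_symm_apply _
    have hadjn : (normalGraph G₂ isVar₂ S₂).Adj (ψ v) (ψ W) := by
      rw [hψW]
      refine normal_adj.mpr ⟨?_, c', hnc', hdeg', hadj', hw'adj⟩
      intro h
      exact hw'ne (congrArg Subtype.val h).symm
    have hadj1 : (normalGraph G₁ isVar₁ S₁).Adj v W := ψ.map_rel_iff.mp hadjn
    obtain ⟨hvW, c, hnc, hdeg, hcv, hcW⟩ := normal_adj.mp hadj1
    have hcmem : c ∈ TD2 G₁ isVar₁ S₁ v.1 := by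
      simp only [TD2, mem_filter]
      exact ⟨mem_univ _, hnc, hdeg, hcv⟩
    refine ⟨c, hcmem, ?_⟩
    have h1 : G₂.Adj (partner c hcmem) (ψ v).1 := hpadj c hcmem v.1 v.2 hcv
    have h2 : G₂.Adj (partner c hcmem) w' := by
      have := hpadj c hcmem W.1 W.2 hcW
      rwa [hψW] at this
    exact uniq2 G₂ hg₂ (Ne.symm hw'ne) h1 h2 hadj' hw'adj

end Iso
lemma construct {V₁ V₂ : Type} [Fintype V₁] [DecidableEq V₁] [Fintype V₂] [DecidableEq V₂]
    (G₁ : SimpleGraph V₁) [DecidableRel G₁.Adj] (G₂ : SimpleGraph V₂) [DecidableRel G₂.Adj]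
    (isVar₁ : V₁ → Prop) [DecidablePred isVar₁] (isVar₂ : V₂ → Prop) [DecidablePred isVar₂]
    (hbip₁ : ∀ u v, G₁.Adj u v → (isVar₁ u ↔ ¬ isVar₁ v))
    (hbip₂ : ∀ u v, G₂.Adj u v → (isVar₂ u ↔ ¬ isVar₂ v))
    (dl : Nat)
    (hreg₁ : ∀ v, isVar₁ v → G₁.degree v = dl)
    (hreg₂ : ∀ v, isVar₂ v → G₂.degree v = dl)
    (hg₁ : (6 : ℕ∞) ≤ G₁.egirth) (hg₂ : (6 : ℕ∞) ≤ G₂.egirth)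
    (S₁ : Finset V₁) (S₂ : Finset V₂)
    (hv₁ : ∀ v ∈ S₁, isVar₁ v) (hv₂ : ∀ v ∈ S₂, isVar₂ v)
    (hets₁ : ∀ c, ¬ isVar₁ c → degIn G₁ S₁ c ≤ 2)
    (hets₂ : ∀ c, ¬ isVar₂ c → degIn G₂ S₂ c ≤ 2)
    (ψ : normalGraph G₁ isVar₁ S₁ ≃g normalGraph G₂ isVar₂ S₂) :
    ∃ φ : (G₁.induce {x : V₁ | x ∈ S₁ ∨ ∃ v ∈ S₁, G₁.Adj x v}) ≃g
           (G₂.induce {x : V₂ | x ∈ S₂ ∨ ∃ v ∈ S₂, G₂.Adj x v}),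
        ∀ x, isVar₁ x.1 ↔ isVar₂ (φ x).1 := by
  classical
  have td1card : ∀ v : {x // x ∈ S₁},
      (TD1 G₁ isVar₁ S₁ v.1).card = (TD1 G₂ isVar₂ S₂ (ψ v).1).card := by
    intro v
    have h1 := count_lemma G₁ isVar₁ hbip₁ dl hreg₁ S₁ hv₁ hets₁ v.2
    have h2 := count_lemma G₂ isVar₂ hbip₂ dl hreg₂ S₂ hv₂ hets₂ (ψ v).2
    have h3 := iso_td2_card hg₁ hg₂ ψ v
    omega
  let e : ∀ v : {x // x ∈ S₁},
      {c // c ∈ TD1 G₁ isVar₁ S₁ v.1} ≃ {c // c ∈ TD1 G₂ isVar₂ S₂ (ψ v).1} :=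
    fun v => Finset.equivOfCardEq (td1card v)
  let k : ∀ v : {x // x ∈ S₁}, {c // c ∈ TD1 G₁ isVar₁ S₁ v.1} →
      {c // c ∈ TD1 G₂ isVar₂ S₂ (ψ v).1} := fun v c => e v c
  let k' : ∀ v' : {x // x ∈ S₂}, {c // c ∈ TD1 G₂ isVar₂ S₂ v'.1} →
      {c // c ∈ TD1 G₁ isVar₁ S₁ (ψ.symm v').1} := fun v' c =>
    (e (ψ.symm v')).symm ⟨c.1, by rw [ψ.apply_symm_apply]; exact c.2⟩
  choose F hF using mk_map G₁ G₂ isVar₁ isVar₂ hbip₁ S₁ S₂ hv₁ hv₂ hets₁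
    (fun v => ψ v) (iso_texist ψ) k
  choose B hB using mk_map G₂ G₁ isVar₂ isVar₁ hbip₂ S₂ S₁ hv₂ hv₁ hets₂
    (fun v => ψ.symm v) (iso_texist ψ.symm) k'
  have hF1 := fun x => (hF x).1
  have hF2 := fun x => (hF x).2.1
  have hF3 := fun x => (hF x).2.2
  have hB1 := fun x => (hB x).1
  have hB2 := fun x => (hB x).2.1
  have hB3 := fun x => (hB x).2.2
  have Fadj := map_adj_preserve G₁ G₂ isVar₁ isVar₂ hbip₁ S₁ S₂ hv₁ hets₁ _ k F hF1 hF2 hF3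
  have Badj := map_adj_preserve G₂ G₁ isVar₂ isVar₁ hbip₂ S₂ S₁ hv₂ hets₂ _ k' B hB1 hB2 hB3
  have esymm : ∀ (v₁ v₂ : {x // x ∈ S₁}), v₁ = v₂ → ∀ (y : V₂)
      (hy₁ : y ∈ TD1 G₂ isVar₂ S₂ (ψ v₁).1) (hy₂ : y ∈ TD1 G₂ isVar₂ S₂ (ψ v₂).1),
      ((e v₁).symm ⟨y, hy₁⟩).1 = ((e v₂).symm ⟨y, hy₂⟩).1 := by
    rintro v₁ v₂ rfl y hy₁ hy₂; rfl
  -- left inverse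
  have linv : ∀ x, B (F x) = x := by
    intro x
    by_cases hvx : isVar₁ x.1
    · have hS : x.1 ∈ S₁ := var_memA hbip₁ hv₁ x.2 hvx
      have h1 : (F x).1 = (ψ ⟨x.1, hS⟩).1 := hF1 x hS
      have hS2 : (F x).1 ∈ S₂ := by rw [h1]; exact (ψ ⟨x.1, hS⟩).2
      have h2 : (B (F x)).1 = (ψ.symm ⟨(F x).1, hS2⟩).1 := hB1 (F x) hS2
      have h3 : (⟨(F x).1, hS2⟩ : {x // x ∈ S₂}) = ψ ⟨x.1, hS⟩ := Subtype.ext h1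
      rw [h3, ψ.symm_apply_apply] at h2
      exact Subtype.ext h2
    · have hd1 : 1 ≤ degIn G₁ S₁ x.1 := check_memA_deg hv₁ x.2 hvx
      have hd2 : degIn G₁ S₁ x.1 ≤ 2 := hets₁ x.1 hvx
      by_cases hdeg : degIn G₁ S₁ x.1 = 2
      · obtain ⟨u, w, huw, hu, hw, hau, haw, -⟩ := pair2 hdeg
        obtain ⟨hn2, hd2', hadj'⟩ := hF2 x hvx hdeg
        obtain ⟨-, -, hadjB⟩ := hB2 (F x) hn2 hd2'
        have hBu : G₁.Adj (B (F x)).1 (ψ.symm (ψ ⟨u, hu⟩)).1 :=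
          hadjB (ψ ⟨u, hu⟩).1 (ψ ⟨u, hu⟩).2 (hadj' u hu hau)
        have hBw : G₁.Adj (B (F x)).1 (ψ.symm (ψ ⟨w, hw⟩)).1 :=
          hadjB (ψ ⟨w, hw⟩).1 (ψ ⟨w, hw⟩).2 (hadj' w hw haw)
        rw [ψ.symm_apply_apply] at hBu hBw
        exact Subtype.ext (uniq2 G₁ hg₁ huw hBu hBw hau haw)
      · have hdeg1 : degIn G₁ S₁ x.1 = 1 := by omega
        obtain ⟨v₀, hv₀, hav₀, -⟩ := single1 hdeg1
        have hmem : x.1 ∈ TD1 G₁ isVar₁ S₁ v₀ := by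
          simp only [TD1, mem_filter]; exact ⟨mem_univ _, hvx, hdeg1, hav₀⟩
        have hF3x : (F x).1 = (e ⟨v₀, hv₀⟩ ⟨x.1, hmem⟩).1 := hF3 x v₀ hv₀ hmem
        have memF : (F x).1 ∈ TD1 G₂ isVar₂ S₂ (ψ ⟨v₀, hv₀⟩).1 := by
          rw [hF3x]; exact (e ⟨v₀, hv₀⟩ ⟨x.1, hmem⟩).2
        have memF' : (F x).1 ∈ TD1 G₂ isVar₂ S₂ (ψ (ψ.symm (ψ ⟨v₀, hv₀⟩))).1 := by
          rw [ψ.apply_symm_apply]; exact memF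
        have h2 : (B (F x)).1 = ((e (ψ.symm (ψ ⟨v₀, hv₀⟩))).symm ⟨(F x).1, memF'⟩).1 :=
          hB3 (F x) (ψ ⟨v₀, hv₀⟩).1 (ψ ⟨v₀, hv₀⟩).2 memF
        rw [esymm _ _ (ψ.symm_apply_apply _) _ memF' memF] at h2
        have h3 : (⟨(F x).1, memF⟩ : {c // c ∈ TD1 G₂ isVar₂ S₂ (ψ ⟨v₀, hv₀⟩).1}) =
            e ⟨v₀, hv₀⟩ ⟨x.1, hmem⟩ := Subtype.ext hF3x
        rw [h3, Equiv.symm_apply_apply] at h2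
        exact Subtype.ext h2
  -- right inverse
  have rinv : ∀ y, F (B y) = y := by
    intro y
    by_cases hvy : isVar₂ y.1
    · have hS : y.1 ∈ S₂ := var_memA hbip₂ hv₂ y.2 hvy
      have h1 : (B y).1 = (ψ.symm ⟨y.1, hS⟩).1 := hB1 y hS
      have hS1 : (B y).1 ∈ S₁ := by rw [h1]; exact (ψ.symm ⟨y.1, hS⟩).2
      have h2 : (F (B y)).1 = (ψ ⟨(B y).1, hS1⟩).1 := hF1 (B y) hS1
      have h3 : (⟨(B y).1, hS1⟩ : {x // x ∈ S₁}) = ψ.symm ⟨y.1, hS⟩ := Subtype.ext h1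
      rw [h3, ψ.apply_symm_apply] at h2
      exact Subtype.ext h2
    · have hd1 : 1 ≤ degIn G₂ S₂ y.1 := check_memA_deg hv₂ y.2 hvy
      have hd2 : degIn G₂ S₂ y.1 ≤ 2 := hets₂ y.1 hvy
      by_cases hdeg : degIn G₂ S₂ y.1 = 2
      · obtain ⟨u, w, huw, hu, hw, hau, haw, -⟩ := pair2 hdeg
        obtain ⟨hn2, hd2', hadj'⟩ := hB2 y hvy hdeg
        obtain ⟨-, -, hadjF⟩ := hF2 (B y) hn2 hd2'
        have hFu : G₂.Adj (F (B y)).1 (ψ (ψ.symm ⟨u, hu⟩)).1 :=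
          hadjF (ψ.symm ⟨u, hu⟩).1 (ψ.symm ⟨u, hu⟩).2 (hadj' u hu hau)
        have hFw : G₂.Adj (F (B y)).1 (ψ (ψ.symm ⟨w, hw⟩)).1 :=
          hadjF (ψ.symm ⟨w, hw⟩).1 (ψ.symm ⟨w, hw⟩).2 (hadj' w hw haw)
        rw [ψ.apply_symm_apply] at hFu hFw
        exact Subtype.ext (uniq2 G₂ hg₂ huw hFu hFw hau haw)
      · have hdeg1 : degIn G₂ S₂ y.1 = 1 := by omega
        obtain ⟨v₀, hv₀, hav₀, -⟩ := single1 hdeg1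
        have hmem : y.1 ∈ TD1 G₂ isVar₂ S₂ v₀ := by
          simp only [TD1, mem_filter]; exact ⟨mem_univ _, hvy, hdeg1, hav₀⟩
        have hmemW : y.1 ∈ TD1 G₂ isVar₂ S₂ (ψ (ψ.symm ⟨v₀, hv₀⟩)).1 := by
          rw [ψ.apply_symm_apply]; exact hmem
        have hBy : (B y).1 = ((e (ψ.symm ⟨v₀, hv₀⟩)).symm ⟨y.1, hmemW⟩).1 :=
          hB3 y v₀ hv₀ hmem
        have memB : (B y).1 ∈ TD1 G₁ isVar₁ S₁ (ψ.symm ⟨v₀, hv₀⟩).1 := by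
          rw [hBy]; exact ((e (ψ.symm ⟨v₀, hv₀⟩)).symm ⟨y.1, hmemW⟩).2
        have h2 : (F (B y)).1 = (e (ψ.symm ⟨v₀, hv₀⟩) ⟨(B y).1, memB⟩).1 :=
          hF3 (B y) (ψ.symm ⟨v₀, hv₀⟩).1 (ψ.symm ⟨v₀, hv₀⟩).2 memB
        have h3 : (⟨(B y).1, memB⟩ : {c // c ∈ TD1 G₁ isVar₁ S₁ (ψ.symm ⟨v₀, hv₀⟩).1}) =
            (e (ψ.symm ⟨v₀, hv₀⟩)).symm ⟨y.1, hmemW⟩ := Subtype.ext hBy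
        rw [h3, Equiv.apply_symm_apply] at h2
        exact Subtype.ext h2
  let Feq : {x : V₁ // x ∈ {x : V₁ | x ∈ S₁ ∨ ∃ v ∈ S₁, G₁.Adj x v}} ≃
      {y : V₂ // y ∈ {y : V₂ | y ∈ S₂ ∨ ∃ v ∈ S₂, G₂.Adj y v}} :=
    ⟨F, B, linv, rinv⟩
  refine ⟨⟨Feq, ?_⟩, ?_⟩
  · intro a b
    constructor
    · intro h
      have := Badj _ _ h
      simp only [Feq, Equiv.coe_fn_mk] at this
      rwa [linv, linv] at this
    · exact Fadj a b
  · intro x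
    by_cases hvx : isVar₁ x.1
    · have hS : x.1 ∈ S₁ := var_memA hbip₁ hv₁ x.2 hvx
      have h1 : (F x).1 = (ψ ⟨x.1, hS⟩).1 := hF1 x hS
      have : isVar₂ (F x).1 := by rw [h1]; exact hv₂ _ (ψ ⟨x.1, hS⟩).2
      simpa [Feq, hvx] using this
    · have hd1 : 1 ≤ degIn G₁ S₁ x.1 := check_memA_deg hv₁ x.2 hvx
      have hd2 : degIn G₁ S₁ x.1 ≤ 2 := hets₁ x.1 hvx
      have : ¬ isVar₂ (F x).1 := by
        by_cases hdeg : degIn G₁ S₁ x.1 = 2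
        · exact (hF2 x hvx hdeg).1
        · have hdeg1 : degIn G₁ S₁ x.1 = 1 := by omega
          obtain ⟨v₀, hv₀, hav₀, -⟩ := single1 hdeg1
          have hmem : x.1 ∈ TD1 G₁ isVar₁ S₁ v₀ := by
            simp only [TD1, mem_filter]; exact ⟨mem_univ _, hvx, hdeg1, hav₀⟩
          have hF3x : (F x).1 = (e ⟨v₀, hv₀⟩ ⟨x.1, hmem⟩).1 := hF3 x v₀ hv₀ hmem
          have := (e ⟨v₀, hv₀⟩ ⟨x.1, hmem⟩).2
          simp only [TD1, mem_filter] at this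
          rw [hF3x]; exact this.2.1
      simp only [Feq, Equiv.coe_fn_mk]
      tauto
lemma fwd_adj {V₁ V₂ : Type} [Fintype V₁] [DecidableEq V₁] [Fintype V₂] [DecidableEq V₂]
    (G₁ : SimpleGraph V₁) [DecidableRel G₁.Adj] (G₂ : SimpleGraph V₂) [DecidableRel G₂.Adj]
    (isVar₁ : V₁ → Prop) [DecidablePred isVar₁] (isVar₂ : V₂ → Prop) [DecidablePred isVar₂]
    (hbip₁ : ∀ u v, G₁.Adj u v → (isVar₁ u ↔ ¬ isVar₁ v))
    (hbip₂ : ∀ u v, G₂.Adj u v → (isVar₂ u ↔ ¬ isVar₂ v))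
    (S₁ : Finset V₁) (S₂ : Finset V₂)
    (hv₁ : ∀ v ∈ S₁, isVar₁ v) (hv₂ : ∀ v ∈ S₂, isVar₂ v)
    (φ : (G₁.induce {x : V₁ | x ∈ S₁ ∨ ∃ v ∈ S₁, G₁.Adj x v}) ≃g
         (G₂.induce {x : V₂ | x ∈ S₂ ∨ ∃ v ∈ S₂, G₂.Adj x v}))
    (hpres : ∀ x, isVar₁ x.1 ↔ isVar₂ (φ x).1) :
    ∀ u w : {x // x ∈ S₁}, (normalGraph G₁ isVar₁ S₁).Adj u w →
      ∀ (hu' : (φ ⟨u.1, Or.inl u.2⟩).1 ∈ S₂) (hw' : (φ ⟨w.1, Or.inl w.2⟩).1 ∈ S₂),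
      (normalGraph G₂ isVar₂ S₂).Adj ⟨(φ ⟨u.1, Or.inl u.2⟩).1, hu'⟩
        ⟨(φ ⟨w.1, Or.inl w.2⟩).1, hw'⟩ := by
  have hvar' : ∀ y, isVar₂ y.1 ↔ isVar₁ (φ.symm y).1 := by
    intro y
    have := hpres (φ.symm y)
    rw [φ.apply_symm_apply] at this
    exact this.symm
  intro u w hadj hu' hw'
  obtain ⟨hne, c, hnc, hdeg, hcu, hcw⟩ := normal_adj.mp hadj
  have cmem : c ∈ {x : V₁ | x ∈ S₁ ∨ ∃ v ∈ S₁, G₁.Adj x v} := Or.inr ⟨u.1, u.2, hcu⟩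
  set C := φ ⟨c, cmem⟩ with hC
  have hnC : ¬ isVar₂ C.1 := fun h => hnc ((hpres ⟨c, cmem⟩).mpr h)
  have hCu : G₂.Adj C.1 (φ ⟨u.1, Or.inl u.2⟩).1 := by
    have : (G₁.induce _).Adj ⟨c, cmem⟩ ⟨u.1, Or.inl u.2⟩ := hcu
    exact φ.map_rel_iff.mpr this
  have hCw : G₂.Adj C.1 (φ ⟨w.1, Or.inl w.2⟩).1 := by
    have : (G₁.induce _).Adj ⟨c, cmem⟩ ⟨w.1, Or.inl w.2⟩ := hcw
    exact φ.map_rel_iff.mpr this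
  have hdegC : degIn G₂ S₂ C.1 = 2 := by
    rw [degIn] at hdeg ⊢
    rw [← hdeg]
    symm
    apply Finset.card_bij (fun x hx => (φ ⟨x, Or.inl (mem_filter.mp hx).1⟩).1)
    · intro x hx
      obtain ⟨hxS, hxadj⟩ := mem_filter.mp hx
      refine mem_filter.mpr ⟨?_, ?_⟩
      · exact var_memA hbip₂ hv₂ (φ ⟨x, Or.inl hxS⟩).2 ((hpres _).mp (hv₁ x hxS))
      · have : (G₁.induce _).Adj ⟨c, cmem⟩ ⟨x, Or.inl hxS⟩ := hxadj
        exact φ.map_rel_iff.mpr this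
    · intro x₁ hx₁ x₂ hx₂ heq
      have := φ.injective (Subtype.ext heq)
      exact congrArg Subtype.val this
    · intro y hy
      obtain ⟨hyS, hyadj⟩ := mem_filter.mp hy
      set X := φ.symm ⟨y, Or.inl hyS⟩ with hX
      have hφX : φ X = ⟨y, Or.inl hyS⟩ := φ.apply_symm_apply _
      have hXvar : isVar₁ X.1 := (hvar' ⟨y, Or.inl hyS⟩).mp (hv₂ y hyS)
      have hXS : X.1 ∈ S₁ := var_memA hbip₁ hv₁ X.2 hXvar
      have hcX : G₁.Adj c X.1 := by
        have h2 : (G₂.induce _).Adj (φ ⟨c, cmem⟩) (φ X) := by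
          rw [hφX]; exact hyadj
        exact φ.map_rel_iff.mp h2
      refine ⟨X.1, mem_filter.mpr ⟨hXS, hcX⟩, ?_⟩
      have : (⟨X.1, Or.inl hXS⟩ : {x : V₁ // x ∈ {x : V₁ | x ∈ S₁ ∨ ∃ v ∈ S₁, G₁.Adj x v}}) = X :=
        rfl
      rw [this, hφX]
  refine normal_adj.mpr ⟨?_, C.1, hnC, hdegC, hCu, hCw⟩
  intro h
  apply hne
  have h1 := Subtype.ext_iff.mp h
  have h2 := φ.injective (Subtype.ext h1)
  have h3 := Subtype.ext_iff.mp h2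
  exact Subtype.ext h3
theorem stmt15 {V₁ V₂ : Type} [Fintype V₁] [DecidableEq V₁] [Fintype V₂] [DecidableEq V₂]
    (G₁ : SimpleGraph V₁) [DecidableRel G₁.Adj] (G₂ : SimpleGraph V₂) [DecidableRel G₂.Adj]
    (isVar₁ : V₁ → Prop) [DecidablePred isVar₁] (isVar₂ : V₂ → Prop) [DecidablePred isVar₂]
    (hbip₁ : ∀ u v, G₁.Adj u v → (isVar₁ u ↔ ¬ isVar₁ v))
    (hbip₂ : ∀ u v, G₂.Adj u v → (isVar₂ u ↔ ¬ isVar₂ v))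
    (dl : Nat)
    (hreg₁ : ∀ v, isVar₁ v → G₁.degree v = dl)
    (hreg₂ : ∀ v, isVar₂ v → G₂.degree v = dl)
    (hg₁ : (6 : ℕ∞) ≤ G₁.egirth) (hg₂ : (6 : ℕ∞) ≤ G₂.egirth)
    (S₁ : Finset V₁) (S₂ : Finset V₂)
    (hv₁ : ∀ v ∈ S₁, isVar₁ v) (hv₂ : ∀ v ∈ S₂, isVar₂ v)
    (hets₁ : ∀ c, ¬ isVar₁ c → degIn G₁ S₁ c ≤ 2)
    (hets₂ : ∀ c, ¬ isVar₂ c → degIn G₂ S₂ c ≤ 2) :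
    (∃ φ : (G₁.induce {x : V₁ | x ∈ S₁ ∨ ∃ v ∈ S₁, G₁.Adj x v}) ≃g
           (G₂.induce {x : V₂ | x ∈ S₂ ∨ ∃ v ∈ S₂, G₂.Adj x v}),
        ∀ x, isVar₁ x.1 ↔ isVar₂ (φ x).1) ↔
    Nonempty (normalGraph G₁ isVar₁ S₁ ≃g normalGraph G₂ isVar₂ S₂) := by

  constructor
  · rintro ⟨φ, hpres⟩
    have hvar' : ∀ y, isVar₂ y.1 ↔ isVar₁ (φ.symm y).1 := by
      intro y
      have := hpres (φ.symm y)
      rw [φ.apply_symm_apply] at this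
      exact this.symm
    let f : {x // x ∈ S₁} → {x // x ∈ S₂} := fun v =>
      ⟨(φ ⟨v.1, Or.inl v.2⟩).1,
        var_memA hbip₂ hv₂ (φ ⟨v.1, Or.inl v.2⟩).2 ((hpres _).mp (hv₁ v.1 v.2))⟩
    let g : {x // x ∈ S₂} → {x // x ∈ S₁} := fun y =>
      ⟨(φ.symm ⟨y.1, Or.inl y.2⟩).1,
        var_memA hbip₁ hv₁ (φ.symm ⟨y.1, Or.inl y.2⟩).2 ((hvar' _).mp (hv₂ y.1 y.2))⟩
    have linv : ∀ v, g (f v) = v := by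
      intro v
      apply Subtype.ext
      have h1 : (⟨(f v).1, Or.inl (f v).2⟩ :
          {x : V₂ // x ∈ {x : V₂ | x ∈ S₂ ∨ ∃ v ∈ S₂, G₂.Adj x v}}) = φ ⟨v.1, Or.inl v.2⟩ :=
        Subtype.ext rfl
      calc (g (f v)).1 = (φ.symm ⟨(f v).1, Or.inl (f v).2⟩).1 := rfl
        _ = (φ.symm (φ ⟨v.1, Or.inl v.2⟩)).1 := by rw [h1]
        _ = v.1 := by rw [φ.symm_apply_apply]
    have rinv : ∀ y, f (g y) = y := by
      intro y
      apply Subtype.ext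
      have h1 : (⟨(g y).1, Or.inl (g y).2⟩ :
          {x : V₁ // x ∈ {x : V₁ | x ∈ S₁ ∨ ∃ v ∈ S₁, G₁.Adj x v}}) = φ.symm ⟨y.1, Or.inl y.2⟩ :=
        Subtype.ext rfl
      calc (f (g y)).1 = (φ ⟨(g y).1, Or.inl (g y).2⟩).1 := rfl
        _ = (φ (φ.symm ⟨y.1, Or.inl y.2⟩)).1 := by rw [h1]
        _ = y.1 := by rw [φ.apply_symm_apply]
    refine Nonempty.intro ⟨⟨f, g, linv, rinv⟩, ?_⟩
    intro u w
    simp only [Equiv.coe_fn_mk]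
    constructor
    · intro h
      have h2 := fwd_adj G₂ G₁ isVar₂ isVar₁ hbip₂ hbip₁ S₂ S₁ hv₂ hv₁ φ.symm hvar'
        (f u) (f w) h (g (f u)).2 (g (f w)).2
      have h3 : (normalGraph G₁ isVar₁ S₁).Adj (g (f u)) (g (f w)) := h2
      rwa [linv, linv] at h3
    · intro h
      exact fwd_adj G₁ G₂ isVar₁ isVar₂ hbip₁ hbip₂ S₁ S₂ hv₁ hv₂ φ hpres u w h (f u).2 (f w).2
  · rintro ⟨ψ⟩
    exact construct G₁ G₂ isVar₁ isVar₂ hbip₁ hbip₂ dl hreg₁ hreg₂ hg₁ hg₂ S₁ S₂ hv₁ hv₂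
      hets₁ hets₂ ψ
end
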